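/- arXiv:1107.4128 — 5 statements merged into one kernel-verified Lean document; each statement's English description precedes it below -/
import Mathlib

section
/- For all real numbers A and B, the function n ↦ Σ_{k=0}^{n} Σ_{l=0}^{3n−3k} (1/6)·[(3n−4k−3l)³·(A−B) + 3·(3n−4k−3l)²·(k+l)·A + 3·(3n−4k−3l)·(k+l)²·A] − ((249/60)·B − A)·n⁵ is O(n⁴) as n → ∞ (n ranging over the natural numbers). (This is the leading-term computation in Theorem: χ(𝒪₃(2n,n)) = n⁵((249/60)c₂ − c₁²) + O(n⁴), with A playing the role of c₁² and B of c₂.) -/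
open Finset Filter Asymptotics

private lemma sum_poly3 (a b c d : ℝ) (N : ℕ) :
    ∑ l ∈ Finset.range (N + 1),
      (a + b * (l : ℝ) + c * (l : ℝ) ^ 2 + d * (l : ℝ) ^ 3)
    = ((N : ℝ) + 1) * a + ((N : ℝ) * ((N : ℝ) + 1) / 2) * b
      + ((N : ℝ) * ((N : ℝ) + 1) * (2 * (N : ℝ) + 1) / 6) * c
      + ((N : ℝ) * ((N : ℝ) + 1) / 2) ^ 2 * d := by
  induction N with
  | zero => simp
  | succ N ih =>
      rw [Finset.sum_range_succ, ih]
      push_cast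
      ring

private lemma sum_poly4 (a b c d e : ℝ) (N : ℕ) :
    ∑ l ∈ Finset.range (N + 1),
      (a + b * (l : ℝ) + c * (l : ℝ) ^ 2 + d * (l : ℝ) ^ 3 + e * (l : ℝ) ^ 4)
    = ((N : ℝ) + 1) * a + ((N : ℝ) * ((N : ℝ) + 1) / 2) * b
      + ((N : ℝ) * ((N : ℝ) + 1) * (2 * (N : ℝ) + 1) / 6) * c
      + ((N : ℝ) * ((N : ℝ) + 1) / 2) ^ 2 * d
      + ((N : ℝ) * ((N : ℝ) + 1) * (2 * (N : ℝ) + 1)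
          * (3 * (N : ℝ) ^ 2 + 3 * (N : ℝ) - 1) / 30) * e := by
  induction N with
  | zero => simp
  | succ N ih =>
      rw [Finset.sum_range_succ, ih]
      push_cast
      ring

/-- closed form of the inner sum, as a polynomial in `x = n`, `y = k`. -/
private noncomputable def Rin (A B x y : ℝ) : ℝ :=
  (9/8:ℝ) * B * y ^ 2 + (-61/12:ℝ) * B * y ^ 3 + (41/8:ℝ) * B * y ^ 4
  + (-9/2:ℝ) * B * x * y + (51/2:ℝ) * B * x * y ^ 2 + (-31:ℝ) * B * x * y ^ 3
  + (27/8:ℝ) * B * x ^ 2 + (-36:ℝ) * B * x ^ 2 * y + (63:ℝ) * B * x ^ 2 * y ^ 2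
  + (63/4:ℝ) * B * x ^ 3 + (-54:ℝ) * B * x ^ 3 * y + (135/8:ℝ) * B * x ^ 4
  + (-1/8:ℝ) * A * y ^ 2 + (7/12:ℝ) * A * y ^ 3 + (-5/8:ℝ) * A * y ^ 4
  + (1/2:ℝ) * A * x * y + (-3:ℝ) * A * x * y ^ 2 + (4:ℝ) * A * x * y ^ 3
  + (-3/8:ℝ) * A * x ^ 2 + (9/2:ℝ) * A * x ^ 2 * y + (-9:ℝ) * A * x ^ 2 * y ^ 2
  + (-9/4:ℝ) * A * x ^ 3 + (9:ℝ) * A * x ^ 3 * y + (-27/8:ℝ) * A * x ^ 4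

private lemma innerSumEq (A B : ℝ) (n k : ℕ) (h : k ≤ n) :
    ∑ l ∈ Finset.range (3 * n - 3 * k + 1),
        (1 / 6 : ℝ) *
          (((3 * (n : ℤ) - 4 * (k : ℤ) - 3 * (l : ℤ) : ℤ) : ℝ) ^ 3 * (A - B)
            + 3 * ((3 * (n : ℤ) - 4 * (k : ℤ) - 3 * (l : ℤ) : ℤ) : ℝ) ^ 2
                * (((k : ℤ) + (l : ℤ) : ℤ) : ℝ) * A
            + 3 * ((3 * (n : ℤ) - 4 * (k : ℤ) - 3 * (l : ℤ) : ℤ) : ℝ)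
                * (((k : ℤ) + (l : ℤ) : ℤ) : ℝ) ^ 2 * A)
    = Rin A B (n : ℝ) (k : ℝ) := by
  have hm : 3 * n - 3 * k = 3 * (n - k) := by omega
  set m : ℕ := n - k with hmdef
  have hx : (n : ℝ) = (k : ℝ) + (m : ℝ) := by
    have : n = k + m := by omega
    rw [this]; push_cast; ring
  set x : ℝ := (n : ℝ)
  set y : ℝ := (k : ℝ)
  calc
    ∑ l ∈ Finset.range (3 * n - 3 * k + 1),
        (1 / 6 : ℝ) *
          (((3 * (n : ℤ) - 4 * (k : ℤ) - 3 * (l : ℤ) : ℤ) : ℝ) ^ 3 * (A - B)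
            + 3 * ((3 * (n : ℤ) - 4 * (k : ℤ) - 3 * (l : ℤ) : ℤ) : ℝ) ^ 2
                * (((k : ℤ) + (l : ℤ) : ℤ) : ℝ) * A
            + 3 * ((3 * (n : ℤ) - 4 * (k : ℤ) - 3 * (l : ℤ) : ℤ) : ℝ)
                * (((k : ℤ) + (l : ℤ) : ℤ) : ℝ) ^ 2 * A)
      = ∑ l ∈ Finset.range (3 * m + 1),
          (((32/3:ℝ) * B * y ^ 3 + (-24:ℝ) * B * x * y ^ 2 + (18:ℝ) * B * x ^ 2 * y
              + (-9/2:ℝ) * B * x ^ 3 + (-14/3:ℝ) * A * y ^ 3 + (27/2:ℝ) * A * x * y ^ 2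
              + (-27/2:ℝ) * A * x ^ 2 * y + (9/2:ℝ) * A * x ^ 3)
            + ((24:ℝ) * B * y ^ 2 + (-36:ℝ) * B * x * y + (27/2:ℝ) * B * x ^ 2
              + (-19/2:ℝ) * A * y ^ 2 + (18:ℝ) * A * x * y + (-9:ℝ) * A * x ^ 2) * (l : ℝ)
            + ((18:ℝ) * B * y + (-27/2:ℝ) * B * x + (-13/2:ℝ) * A * y + (6:ℝ) * A * x)
                * (l : ℝ) ^ 2
            + ((9/2:ℝ) * B + (-3/2:ℝ) * A) * (l : ℝ) ^ 3) := by
        rw [hm]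
        refine Finset.sum_congr rfl fun l _ => ?_
        push_cast
        ring
    _ = _ := by
        rw [sum_poly3]
        have h3m : ((3 * m : ℕ) : ℝ) = 3 * (m : ℝ) := by push_cast; ring
        rw [h3m]
        have hy : (m : ℝ) = x - y := by rw [hx]; ring
        rw [hy]
        simp only [Rin]
        ring

theorem stmt_0 (A B : ℝ) :
    (fun n : ℕ =>
      (∑ k ∈ Finset.range (n + 1), ∑ l ∈ Finset.range (3 * n - 3 * k + 1),
        (1 / 6 : ℝ) *
          (((3 * (n : ℤ) - 4 * (k : ℤ) - 3 * (l : ℤ) : ℤ) : ℝ) ^ 3 * (A - B)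
            + 3 * ((3 * (n : ℤ) - 4 * (k : ℤ) - 3 * (l : ℤ) : ℤ) : ℝ) ^ 2
                * (((k : ℤ) + (l : ℤ) : ℤ) : ℝ) * A
            + 3 * ((3 * (n : ℤ) - 4 * (k : ℤ) - 3 * (l : ℤ) : ℤ) : ℝ)
                * (((k : ℤ) + (l : ℤ) : ℤ) : ℝ) ^ 2 * A))
        - ((249 / 60 : ℝ) * B - A) * (n : ℝ) ^ 5)
      =O[atTop] (fun n : ℕ => (n : ℝ) ^ 4) := by
  have key : ∀ n : ℕ,
      (∑ k ∈ Finset.range (n + 1), ∑ l ∈ Finset.range (3 * n - 3 * k + 1),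
        (1 / 6 : ℝ) *
          (((3 * (n : ℤ) - 4 * (k : ℤ) - 3 * (l : ℤ) : ℤ) : ℝ) ^ 3 * (A - B)
            + 3 * ((3 * (n : ℤ) - 4 * (k : ℤ) - 3 * (l : ℤ) : ℤ) : ℝ) ^ 2
                * (((k : ℤ) + (l : ℤ) : ℤ) : ℝ) * A
            + 3 * ((3 * (n : ℤ) - 4 * (k : ℤ) - 3 * (l : ℤ) : ℤ) : ℝ)
                * (((k : ℤ) + (l : ℤ) : ℤ) : ℝ) ^ 2 * A))
        - ((249 / 60 : ℝ) * B - A) * (n : ℝ) ^ 5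
      = ((1/60:ℝ) * B) * (n : ℝ) ^ 1
        + ((14/3:ℝ) * B + (-13/24:ℝ) * A) * (n : ℝ) ^ 2
        + ((167/12:ℝ) * B + (-25/12:ℝ) * A) * (n : ℝ) ^ 3
        + ((161/12:ℝ) * B + (-61/24:ℝ) * A) * (n : ℝ) ^ 4 := by
    intro n
    have h1 : ∑ k ∈ Finset.range (n + 1), ∑ l ∈ Finset.range (3 * n - 3 * k + 1),
        (1 / 6 : ℝ) *
          (((3 * (n : ℤ) - 4 * (k : ℤ) - 3 * (l : ℤ) : ℤ) : ℝ) ^ 3 * (A - B)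
            + 3 * ((3 * (n : ℤ) - 4 * (k : ℤ) - 3 * (l : ℤ) : ℤ) : ℝ) ^ 2
                * (((k : ℤ) + (l : ℤ) : ℤ) : ℝ) * A
            + 3 * ((3 * (n : ℤ) - 4 * (k : ℤ) - 3 * (l : ℤ) : ℤ) : ℝ)
                * (((k : ℤ) + (l : ℤ) : ℤ) : ℝ) ^ 2 * A)
        = ∑ k ∈ Finset.range (n + 1), Rin A B (n : ℝ) (k : ℝ) := by
      refine Finset.sum_congr rfl fun k hk => ?_
      exact innerSumEq A B n k (Nat.lt_succ_iff.mp (Finset.mem_range.mp hk))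
    rw [h1]
    set x : ℝ := (n : ℝ)
    have h2 : ∑ k ∈ Finset.range (n + 1), Rin A B x (k : ℝ)
        = ∑ k ∈ Finset.range (n + 1),
          (((27/8:ℝ) * B * x ^ 2 + (63/4:ℝ) * B * x ^ 3 + (135/8:ℝ) * B * x ^ 4
              + (-3/8:ℝ) * A * x ^ 2 + (-9/4:ℝ) * A * x ^ 3 + (-27/8:ℝ) * A * x ^ 4)
            + ((-9/2:ℝ) * B * x + (-36:ℝ) * B * x ^ 2 + (-54:ℝ) * B * x ^ 3
              + (1/2:ℝ) * A * x + (9/2:ℝ) * A * x ^ 2 + (9:ℝ) * A * x ^ 3) * (k : ℝ)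
            + ((9/8:ℝ) * B + (51/2:ℝ) * B * x + (63:ℝ) * B * x ^ 2
              + (-1/8:ℝ) * A + (-3:ℝ) * A * x + (-9:ℝ) * A * x ^ 2) * (k : ℝ) ^ 2
            + ((-61/12:ℝ) * B + (-31:ℝ) * B * x + (7/12:ℝ) * A + (4:ℝ) * A * x)
                * (k : ℝ) ^ 3
            + ((41/8:ℝ) * B + (-5/8:ℝ) * A) * (k : ℝ) ^ 4) := by
      refine Finset.sum_congr rfl fun k _ => ?_
      simp only [Rin]; ring
    rw [h2, sum_poly4]
    ring
  have hfun : (fun n : ℕ =>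
      (∑ k ∈ Finset.range (n + 1), ∑ l ∈ Finset.range (3 * n - 3 * k + 1),
        (1 / 6 : ℝ) *
          (((3 * (n : ℤ) - 4 * (k : ℤ) - 3 * (l : ℤ) : ℤ) : ℝ) ^ 3 * (A - B)
            + 3 * ((3 * (n : ℤ) - 4 * (k : ℤ) - 3 * (l : ℤ) : ℤ) : ℝ) ^ 2
                * (((k : ℤ) + (l : ℤ) : ℤ) : ℝ) * A
            + 3 * ((3 * (n : ℤ) - 4 * (k : ℤ) - 3 * (l : ℤ) : ℤ) : ℝ)
                * (((k : ℤ) + (l : ℤ) : ℤ) : ℝ) ^ 2 * A))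
        - ((249 / 60 : ℝ) * B - A) * (n : ℝ) ^ 5)
      = fun n : ℕ =>
        ((1/60:ℝ) * B) * (n : ℝ) ^ 1
        + ((14/3:ℝ) * B + (-13/24:ℝ) * A) * (n : ℝ) ^ 2
        + ((167/12:ℝ) * B + (-25/12:ℝ) * A) * (n : ℝ) ^ 3
        + ((161/12:ℝ) * B + (-61/24:ℝ) * A) * (n : ℝ) ^ 4 := funext key
  rw [hfun]
  have hpow : ∀ j : ℕ, j ≤ 4 →
      (fun n : ℕ => (n : ℝ) ^ j) =O[atTop] (fun n : ℕ => (n : ℝ) ^ 4) := by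
    intro j hj
    apply Asymptotics.IsBigO.of_bound 1
    filter_upwards [Filter.eventually_ge_atTop 1] with n hn
    have h1 : (1 : ℝ) ≤ (n : ℝ) := by exact_mod_cast hn
    simp only [one_mul, Real.norm_eq_abs]
    rw [abs_of_nonneg (by positivity), abs_of_nonneg (by positivity)]
    exact pow_le_pow_right₀ h1 hj
  exact ((((hpow 1 (by norm_num)).const_mul_left _).add
    ((hpow 2 (by norm_num)).const_mul_left _)).add
    ((hpow 3 (by norm_num)).const_mul_left _)).add
    ((hpow 4 (by norm_num)).const_mul_left _)
end

section
/- For every integer c ≥ 3 and all real numbers A and B, the function n ↦ Σ_{k=0}^{n} Σ_{l=0}^{cn−3k} (1/6)·[(cn−4k−3l)³·(A−B) + 3·(cn−4k−3l)²·(k+l)·A + 3·(cn−4k−3l)·(k+l)²·A] − n⁵·[ ((5/24)c⁴ − c³ + (7/3)c² − (31/12)c + 41/40)·B − ((1/24)c⁴ − (1/6)c³ + (1/3)c² − (1/3)c + 1/8)·A ] is O(n⁴) as n → ∞. -/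
open Finset Filter Asymptotics

private lemma ps0 (M : ℕ) : ∑ l ∈ Finset.range (M + 1), (1 : ℝ) = (M : ℝ) + 1 := by
  simp

private lemma ps1 (M : ℕ) : ∑ l ∈ Finset.range (M + 1), (l : ℝ) = (M : ℝ) * ((M : ℝ) + 1) / 2 := by
  induction M with
  | zero => simp
  | succ m ih => rw [Finset.sum_range_succ, ih]; push_cast; ring

private lemma ps2 (M : ℕ) : ∑ l ∈ Finset.range (M + 1), (l : ℝ) ^ 2
    = (M : ℝ) * ((M : ℝ) + 1) * (2 * (M : ℝ) + 1) / 6 := by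
  induction M with
  | zero => simp
  | succ m ih => rw [Finset.sum_range_succ, ih]; push_cast; ring

private lemma ps3 (M : ℕ) : ∑ l ∈ Finset.range (M + 1), (l : ℝ) ^ 3
    = ((M : ℝ) * ((M : ℝ) + 1) / 2) ^ 2 := by
  induction M with
  | zero => simp
  | succ m ih => rw [Finset.sum_range_succ, ih]; push_cast; ring

private lemma ps4 (M : ℕ) : ∑ l ∈ Finset.range (M + 1), (l : ℝ) ^ 4
    = (M : ℝ) * ((M : ℝ) + 1) * (2 * (M : ℝ) + 1) * (3 * (M : ℝ) ^ 2 + 3 * (M : ℝ) - 1) / 30 := by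
  induction M with
  | zero => simp
  | succ m ih => rw [Finset.sum_range_succ, ih]; push_cast; ring

private lemma sumInnerCubic (A B v : ℝ) (M : ℕ) :
    ∑ l ∈ Finset.range (M + 1),
      (1 / 6 : ℝ) * (((M : ℝ) - v - 3 * (l : ℝ)) ^ 3 * (A - B)
        + 3 * ((M : ℝ) - v - 3 * (l : ℝ)) ^ 2 * (v + (l : ℝ)) * A
        + 3 * ((M : ℝ) - v - 3 * (l : ℝ)) * (v + (l : ℝ)) ^ 2 * A)
    = (1 / 6 : ℝ) * B * v ^ 3 + (3 / 4 : ℝ) * B * (M:ℝ) * v + (1 / 4 : ℝ) * B * (M:ℝ) * v ^ 2 + (1 / 6 : ℝ) * B * (M:ℝ) * v ^ 3 + (3 / 8 : ℝ) * B * (M:ℝ) ^ 2 + (5 / 4 : ℝ) * B * (M:ℝ) ^ 2 * v + (1 / 4 : ℝ) * B * (M:ℝ) ^ 2 * v ^ 2 + (7 / 12 : ℝ) * B * (M:ℝ) ^ 3 + (1 / 2 : ℝ) * B * (M:ℝ) ^ 3 * v + (5 / 24 : ℝ) * B * (M:ℝ) ^ 4 + (-1 / 6 : ℝ) * A * v ^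 3 + (-1 / 12 : ℝ) * A * (M:ℝ) * v + (-1 / 4 : ℝ) * A * (M:ℝ) * v ^ 2 + (-1 / 6 : ℝ) * A * (M:ℝ) * v ^ 3 + (-1 / 24 : ℝ) * A * (M:ℝ) ^ 2 + (-1 / 4 : ℝ) * A * (M:ℝ) ^ 2 * v + (-1 / 4 : ℝ) * A * (M:ℝ) ^ 2 * v ^ 2 + (-1 / 12 : ℝ) * A * (M:ℝ) ^ 3 + (-1 / 6 : ℝ) * A * (M:ℝ) ^ 3 * v + (-1 / 24 : ℝ) * A * (M:ℝ) ^ 4 := by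
  have h : ∀ l ∈ Finset.range (M + 1),
      (1 / 6 : ℝ) * (((M : ℝ) - v - 3 * (l : ℝ)) ^ 3 * (A - B)
        + 3 * ((M : ℝ) - v - 3 * (l : ℝ)) ^ 2 * (v + (l : ℝ)) * A
        + 3 * ((M : ℝ) - v - 3 * (l : ℝ)) * (v + (l : ℝ)) ^ 2 * A)
      = ((1 / 6 : ℝ) * B * v ^ 3 + (-1 / 2 : ℝ) * B * (M:ℝ) * v ^ 2 + (1 / 2 : ℝ) * B * (M:ℝ) ^ 2 * v + (-1 / 6 : ℝ) * B * (M:ℝ) ^ 3 + (-1 / 6 : ℝ) * A * v ^ 3 + (1 / 6 : ℝ) * A * (M:ℝ) ^ 3) * (1 : ℝ) + ((3 / 2 : ℝ) * B * v ^ 2 + (-3 : ℝ) * B * (M:ℝ) * v + (3 / 2 : ℝ) * B * (M:ℝ) ^ 2 + (-1 / 2 : ℝ) * A * v ^ 2 - A * (M:ℝ) ^ 2) * (l : ℝ)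
        + ((9 / 2 : ℝ) * B * v + (-9 / 2 : ℝ) * B * (M:ℝ) + (-1 / 2 : ℝ) * A * v + (2 : ℝ) * A * (M:ℝ)) * (l : ℝ) ^ 2 + ((9 / 2 : ℝ) * B + (-3 / 2 : ℝ) * A) * (l : ℝ) ^ 3 := by
    intro l _
    ring
  rw [Finset.sum_congr rfl h]
  simp only [Finset.sum_add_distrib, ← Finset.mul_sum, ps0, ps1, ps2, ps3]
  ring

private lemma mono_bigO (i : ℕ) (hi : i ≤ 4) (E : ℝ) :
    (fun n : ℕ => E * (n : ℝ) ^ i) =O[atTop] (fun n : ℕ => (n : ℝ) ^ 4) := by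
  apply IsBigO.const_mul_left
  apply IsBigO.of_bound 1
  filter_upwards [eventually_ge_atTop 1] with n hn
  have h1 : (1 : ℝ) ≤ (n : ℝ) := by exact_mod_cast hn
  simp only [norm_pow, Real.norm_natCast, one_mul]
  exact pow_le_pow_right₀ h1 hi

private lemma key (c : ℕ) (hc : 3 ≤ c) (A B : ℝ) (n : ℕ) :
    (∑ k ∈ Finset.range (n + 1), ∑ l ∈ Finset.range (c * n - 3 * k + 1),
        (1 / 6 : ℝ) *
          ((((c : ℤ) * (n : ℤ) - 4 * (k : ℤ) - 3 * (l : ℤ) : ℤ) : ℝ) ^ 3 * (A - B)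
            + 3 * (((c : ℤ) * (n : ℤ) - 4 * (k : ℤ) - 3 * (l : ℤ) : ℤ) : ℝ) ^ 2
                * (((k : ℤ) + (l : ℤ) : ℤ) : ℝ) * A
            + 3 * (((c : ℤ) * (n : ℤ) - 4 * (k : ℤ) - 3 * (l : ℤ) : ℤ) : ℝ)
                * (((k : ℤ) + (l : ℤ) : ℤ) : ℝ) ^ 2 * A))
    = (1 / 60 : ℝ) * B * (n:ℝ) + (-17 / 24 : ℝ) * B * (n:ℝ) ^ 2 + (-11 / 24 : ℝ) * B * (n:ℝ) ^ 3 + (31 / 24 : ℝ) * B * (n:ℝ) ^ 4 + (41 / 40 : ℝ) * B * (n:ℝ) ^ 5 + (2 / 3 : ℝ) * B * (c:ℝ) * (n:ℝ) ^ 2 + (11 / 12 : ℝ) * B * (c:ℝ) * (n:ℝ) ^ 3 + (-7 / 3 : ℝ) * B * (c:ℝ) * (n:ℝ) ^ 4 + (-31 / 12 : ℝ) * B * (c:ℝ) * (n:ℝ) ^ 5 + (3 / 8 : ℝ) * B * (c:ℝ) ^ 2 * (n:ℝ) ^ 2 + (-11 / 24 : ℝ) * B * (c:ℝ) ^ 2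 * (n:ℝ) ^ 3 + (3 / 2 : ℝ) * B * (c:ℝ) ^ 2 * (n:ℝ) ^ 4 + (7 / 3 : ℝ) * B * (c:ℝ) ^ 2 * (n:ℝ) ^ 5 + (7 / 12 : ℝ) * B * (c:ℝ) ^ 3 * (n:ℝ) ^ 3 + (-5 / 12 : ℝ) * B * (c:ℝ) ^ 3 * (n:ℝ) ^ 4 - B * (c:ℝ) ^ 3 * (n:ℝ) ^ 5 + (5 / 24 : ℝ) * B * (c:ℝ) ^ 4 * (n:ℝ) ^ 4 + (5 / 24 : ℝ) * B * (c:ℝ) ^ 4 * (n:ℝ) ^ 5 + (1 / 12 : ℝ) * A * (n:ℝ) ^ 2 + (1 / 24 : ℝ) * A * (n:ℝ) ^ 3 + (-1 / 6 : ℝ) * A * (n:ℝ) ^ 4 + (-1 / 8 : ℝ) * A * (n:ℝ) ^ 5 + (-1 / 12 : ℝ) * A * (c:ℝ) * (n:ℝ) ^ 2 + (-1 / 12 : ℝ) * A * (c:ℝ) * (n:ℝ) ^ 3 + (1 / 3 : ℝ) * A * (c:ℝ) * (n:ℝ) ^ 4 + (1 / 3 : ℝ) * A * (c:ℝ) * (n:ℝ)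 ^ 5 + (-1 / 24 : ℝ) * A * (c:ℝ) ^ 2 * (n:ℝ) ^ 2 + (1 / 24 : ℝ) * A * (c:ℝ) ^ 2 * (n:ℝ) ^ 3 + (-1 / 4 : ℝ) * A * (c:ℝ) ^ 2 * (n:ℝ) ^ 4 + (-1 / 3 : ℝ) * A * (c:ℝ) ^ 2 * (n:ℝ) ^ 5 + (-1 / 12 : ℝ) * A * (c:ℝ) ^ 3 * (n:ℝ) ^ 3 + (1 / 12 : ℝ) * A * (c:ℝ) ^ 3 * (n:ℝ) ^ 4 + (1 / 6 : ℝ) * A * (c:ℝ) ^ 3 * (n:ℝ) ^ 5 + (-1 / 24 : ℝ) * A * (c:ℝ) ^ 4 * (n:ℝ) ^ 4 + (-1 / 24 : ℝ) * A * (c:ℝ) ^ 4 * (n:ℝ) ^ 5 := by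
  have step : ∀ k ∈ Finset.range (n + 1),
      (∑ l ∈ Finset.range (c * n - 3 * k + 1),
        (1 / 6 : ℝ) *
          ((((c : ℤ) * (n : ℤ) - 4 * (k : ℤ) - 3 * (l : ℤ) : ℤ) : ℝ) ^ 3 * (A - B)
            + 3 * (((c : ℤ) * (n : ℤ) - 4 * (k : ℤ) - 3 * (l : ℤ) : ℤ) : ℝ) ^ 2
                * (((k : ℤ) + (l : ℤ) : ℤ) : ℝ) * A
            + 3 * (((c : ℤ) * (n : ℤ) - 4 * (k : ℤ) - 3 * (l : ℤ) : ℤ) : ℝ)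
                * (((k : ℤ) + (l : ℤ) : ℤ) : ℝ) ^ 2 * A))
      = (9 / 8 : ℝ) * B * (k:ℝ) ^ 2 + (-61 / 12 : ℝ) * B * (k:ℝ) ^ 3 + (41 / 8 : ℝ) * B * (k:ℝ) ^ 4 + (-3 / 2 : ℝ) * B * (c:ℝ) * (n:ℝ) * (k:ℝ) + (17 / 2 : ℝ) * B * (c:ℝ) * (n:ℝ) * (k:ℝ) ^ 2 + (-31 / 3 : ℝ) * B * (c:ℝ) * (n:ℝ) * (k:ℝ) ^ 3 + (3 / 8 : ℝ) * B * (c:ℝ) ^ 2 * (n:ℝ) ^ 2 + (-4 : ℝ) * B * (c:ℝ) ^ 2 * (n:ℝ) ^ 2 * (k:ℝ) + (7 : ℝ) * B * (c:ℝ) ^ 2 * (n:ℝ) ^ 2 * (k:ℝ) ^ 2 + (7 / 12 : ℝ) * B * (c:ℝ) ^ 3 * (n:ℝ) ^ 3 + (-2 : ℝ) * B * (c:ℝ) ^ 3 * (n:ℝ) ^ 3 * (k:ℝ) + (5 / 24 : ℝ) * B * (c:ℝ) ^ 4 * (n:ℝ) ^ 4 + (-1 / 8 : ℝ) * A * (k:ℝ)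 ^ 2 + (7 / 12 : ℝ) * A * (k:ℝ) ^ 3 + (-5 / 8 : ℝ) * A * (k:ℝ) ^ 4 + (1 / 6 : ℝ) * A * (c:ℝ) * (n:ℝ) * (k:ℝ) - A * (c:ℝ) * (n:ℝ) * (k:ℝ) ^ 2 + (4 / 3 : ℝ) * A * (c:ℝ) * (n:ℝ) * (k:ℝ) ^ 3 + (-1 / 24 : ℝ) * A * (c:ℝ) ^ 2 * (n:ℝ) ^ 2 + (1 / 2 : ℝ) * A * (c:ℝ) ^ 2 * (n:ℝ) ^ 2 * (k:ℝ) - A * (c:ℝ) ^ 2 * (n:ℝ) ^ 2 * (k:ℝ) ^ 2 + (-1 / 12 : ℝ) * A * (c:ℝ) ^ 3 * (n:ℝ) ^ 3 + (1 / 3 : ℝ) * A * (c:ℝ) ^ 3 * (n:ℝ) ^ 3 * (k:ℝ) + (-1 / 24 : ℝ) * A * (c:ℝ) ^ 4 * (n:ℝ) ^ 4 := by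
    intro k hk
    have hkn : k ≤ n := Nat.lt_succ_iff.mp (Finset.mem_range.mp hk)
    have h3 : 3 * k ≤ c * n := le_trans (Nat.mul_le_mul hc hkn) le_rfl
    have hM : (((c * n - 3 * k : ℕ)) : ℝ) = (c : ℝ) * (n : ℝ) - 3 * (k : ℝ) := by
      rw [Nat.cast_sub h3]; push_cast; ring
    have hcong : ∀ l ∈ Finset.range (c * n - 3 * k + 1),
        (1 / 6 : ℝ) *
          ((((c : ℤ) * (n : ℤ) - 4 * (k : ℤ) - 3 * (l : ℤ) : ℤ) : ℝ) ^ 3 * (A - B)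
            + 3 * (((c : ℤ) * (n : ℤ) - 4 * (k : ℤ) - 3 * (l : ℤ) : ℤ) : ℝ) ^ 2
                * (((k : ℤ) + (l : ℤ) : ℤ) : ℝ) * A
            + 3 * (((c : ℤ) * (n : ℤ) - 4 * (k : ℤ) - 3 * (l : ℤ) : ℤ) : ℝ)
                * (((k : ℤ) + (l : ℤ) : ℤ) : ℝ) ^ 2 * A)
        = (1 / 6 : ℝ) * ((((c * n - 3 * k : ℕ) : ℝ) - (k : ℝ) - 3 * (l : ℝ)) ^ 3 * (A - B)
            + 3 * (((c * n - 3 * k : ℕ) : ℝ) - (k : ℝ) - 3 * (l : ℝ)) ^ 2 * ((k : ℝ) + (l : ℝ)) * A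
            + 3 * (((c * n - 3 * k : ℕ) : ℝ) - (k : ℝ) - 3 * (l : ℝ)) * ((k : ℝ) + (l : ℝ)) ^ 2 * A) := by
      intro l _
      rw [hM]
      push_cast
      ring
    rw [Finset.sum_congr rfl hcong, sumInnerCubic A B (k : ℝ) (c * n - 3 * k), hM]
    ring
  rw [Finset.sum_congr rfl step]
  have h2 : ∀ k ∈ Finset.range (n + 1),
      ((9 / 8 : ℝ) * B * (k:ℝ) ^ 2 + (-61 / 12 : ℝ) * B * (k:ℝ) ^ 3 + (41 / 8 : ℝ) * B * (k:ℝ) ^ 4 + (-3 / 2 : ℝ) * B * (c:ℝ) * (n:ℝ) * (k:ℝ) + (17 / 2 : ℝ) * B * (c:ℝ) * (n:ℝ) * (k:ℝ) ^ 2 + (-31 / 3 : ℝ) * B * (c:ℝ) * (n:ℝ) * (k:ℝ) ^ 3 + (3 / 8 : ℝ) * B * (c:ℝ) ^ 2 * (n:ℝ) ^ 2 + (-4 : ℝ) * B * (c:ℝ) ^ 2 * (n:ℝ) ^ 2 * (k:ℝ) + (7 : ℝ) * B * (c:ℝ) ^ 2 * (n:ℝ) ^ 2 * (k:ℝ) ^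 2 + (7 / 12 : ℝ) * B * (c:ℝ) ^ 3 * (n:ℝ) ^ 3 + (-2 : ℝ) * B * (c:ℝ) ^ 3 * (n:ℝ) ^ 3 * (k:ℝ) + (5 / 24 : ℝ) * B * (c:ℝ) ^ 4 * (n:ℝ) ^ 4 + (-1 / 8 : ℝ) * A * (k:ℝ) ^ 2 + (7 / 12 : ℝ) * A * (k:ℝ) ^ 3 + (-5 / 8 : ℝ) * A * (k:ℝ) ^ 4 + (1 / 6 : ℝ) * A * (c:ℝ) * (n:ℝ) * (k:ℝ) - A * (c:ℝ) * (n:ℝ) * (k:ℝ) ^ 2 + (4 / 3 : ℝ) * A * (c:ℝ) * (n:ℝ) * (k:ℝ) ^ 3 + (-1 / 24 : ℝ) * A * (c:ℝ) ^ 2 * (n:ℝ) ^ 2 + (1 / 2 : ℝ) * A * (c:ℝ) ^ 2 * (n:ℝ) ^ 2 * (k:ℝ) - A * (c:ℝ) ^ 2 * (n:ℝ) ^ 2 * (k:ℝ) ^ 2 + (-1 / 12 : ℝ) * A * (c:ℝ) ^ 3 * (n:ℝ) ^ 3 + (1 / 3 : ℝ) * A * (c:ℝ) ^ 3 * (n:ℝ)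 ^ 3 * (k:ℝ) + (-1 / 24 : ℝ) * A * (c:ℝ) ^ 4 * (n:ℝ) ^ 4)
      = ((3 / 8 : ℝ) * B * (c:ℝ) ^ 2 * (n:ℝ) ^ 2 + (7 / 12 : ℝ) * B * (c:ℝ) ^ 3 * (n:ℝ) ^ 3 + (5 / 24 : ℝ) * B * (c:ℝ) ^ 4 * (n:ℝ) ^ 4 + (-1 / 24 : ℝ) * A * (c:ℝ) ^ 2 * (n:ℝ) ^ 2 + (-1 / 12 : ℝ) * A * (c:ℝ) ^ 3 * (n:ℝ) ^ 3 + (-1 / 24 : ℝ) * A * (c:ℝ) ^ 4 * (n:ℝ) ^ 4) * (1 : ℝ) + ((-3 / 2 : ℝ) * B * (c:ℝ) * (n:ℝ) + (-4 : ℝ) * B * (c:ℝ) ^ 2 * (n:ℝ) ^ 2 + (-2 : ℝ) * B * (c:ℝ) ^ 3 * (n:ℝ) ^ 3 + (1 / 6 : ℝ) * A * (c:ℝ) * (n:ℝ) + (1 / 2 : ℝ) * A * (c:ℝ) ^ 2 * (n:ℝ) ^ 2 + (1 / 3 : ℝ) * A * (c:ℝ) ^ 3 * (n:ℝ) ^ 3)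 * (k : ℝ)
        + ((9 / 8 : ℝ) * B + (17 / 2 : ℝ) * B * (c:ℝ) * (n:ℝ) + (7 : ℝ) * B * (c:ℝ) ^ 2 * (n:ℝ) ^ 2 + (-1 / 8 : ℝ) * A - A * (c:ℝ) * (n:ℝ) - A * (c:ℝ) ^ 2 * (n:ℝ) ^ 2) * (k : ℝ) ^ 2 + ((-61 / 12 : ℝ) * B + (-31 / 3 : ℝ) * B * (c:ℝ) * (n:ℝ) + (7 / 12 : ℝ) * A + (4 / 3 : ℝ) * A * (c:ℝ) * (n:ℝ)) * (k : ℝ) ^ 3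
        + ((41 / 8 : ℝ) * B + (-5 / 8 : ℝ) * A) * (k : ℝ) ^ 4 := by
    intro k _
    ring
  rw [Finset.sum_congr rfl h2]
  simp only [Finset.sum_add_distrib, ← Finset.mul_sum, ps0, ps1, ps2, ps3, ps4]
  ring

theorem stmt_6 (c : ℕ) (hc : 3 ≤ c) (A B : ℝ) :
    (fun n : ℕ =>
      (∑ k ∈ Finset.range (n + 1), ∑ l ∈ Finset.range (c * n - 3 * k + 1),
        (1 / 6 : ℝ) *
          ((((c : ℤ) * (n : ℤ) - 4 * (k : ℤ) - 3 * (l : ℤ) : ℤ) : ℝ) ^ 3 * (A - B)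
            + 3 * (((c : ℤ) * (n : ℤ) - 4 * (k : ℤ) - 3 * (l : ℤ) : ℤ) : ℝ) ^ 2
                * (((k : ℤ) + (l : ℤ) : ℤ) : ℝ) * A
            + 3 * (((c : ℤ) * (n : ℤ) - 4 * (k : ℤ) - 3 * (l : ℤ) : ℤ) : ℝ)
                * (((k : ℤ) + (l : ℤ) : ℤ) : ℝ) ^ 2 * A))
        - (n : ℝ) ^ 5 *
          (((5 / 24 : ℝ) * (c : ℝ) ^ 4 - (c : ℝ) ^ 3 + (7 / 3) * (c : ℝ) ^ 2
              - (31 / 12) * (c : ℝ) + 41 / 40) * B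
            - ((1 / 24 : ℝ) * (c : ℝ) ^ 4 - (1 / 6) * (c : ℝ) ^ 3 + (1 / 3) * (c : ℝ) ^ 2
              - (1 / 3) * (c : ℝ) + 1 / 8) * A))
      =O[atTop] (fun n : ℕ => (n : ℝ) ^ 4) := by
  have heq : (fun n : ℕ =>
      (∑ k ∈ Finset.range (n + 1), ∑ l ∈ Finset.range (c * n - 3 * k + 1),
        (1 / 6 : ℝ) *
          ((((c : ℤ) * (n : ℤ) - 4 * (k : ℤ) - 3 * (l : ℤ) : ℤ) : ℝ) ^ 3 * (A - B)
            + 3 * (((c : ℤ) * (n : ℤ) - 4 * (k : ℤ) - 3 * (l : ℤ) : ℤ) : ℝ) ^ 2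
                * (((k : ℤ) + (l : ℤ) : ℤ) : ℝ) * A
            + 3 * (((c : ℤ) * (n : ℤ) - 4 * (k : ℤ) - 3 * (l : ℤ) : ℤ) : ℝ)
                * (((k : ℤ) + (l : ℤ) : ℤ) : ℝ) ^ 2 * A))
        - (n : ℝ) ^ 5 *
          (((5 / 24 : ℝ) * (c : ℝ) ^ 4 - (c : ℝ) ^ 3 + (7 / 3) * (c : ℝ) ^ 2
              - (31 / 12) * (c : ℝ) + 41 / 40) * B
            - ((1 / 24 : ℝ) * (c : ℝ) ^ 4 - (1 / 6) * (c : ℝ) ^ 3 + (1 / 3) * (c : ℝ) ^ 2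
              - (1 / 3) * (c : ℝ) + 1 / 8) * A))
      = (fun n : ℕ => ((1 / 60 : ℝ) * B) * (n : ℝ) ^ 1 + ((-17 / 24 : ℝ) * B + (2 / 3 : ℝ) * B * (c:ℝ) + (3 / 8 : ℝ) * B * (c:ℝ) ^ 2 + (1 / 12 : ℝ) * A + (-1 / 12 : ℝ) * A * (c:ℝ) + (-1 / 24 : ℝ) * A * (c:ℝ) ^ 2) * (n : ℝ) ^ 2
          + ((-11 / 24 : ℝ) * B + (11 / 12 : ℝ) * B * (c:ℝ) + (-11 / 24 : ℝ) * B * (c:ℝ) ^ 2 + (7 / 12 : ℝ) * B * (c:ℝ) ^ 3 + (1 / 24 : ℝ) * A + (-1 / 12 : ℝ) * A * (c:ℝ) + (1 / 24 : ℝ) * A * (c:ℝ) ^ 2 + (-1 / 12 : ℝ) * A * (c:ℝ) ^ 3) * (n : ℝ) ^ 3 + ((31 / 24 : ℝ) * B + (-7 / 3 : ℝ) * B * (c:ℝ) + (3 / 2 : ℝ) * B * (c:ℝ) ^ 2 + (-5 / 12 : ℝ) * B * (c:ℝ) ^ 3 + (5 / 24 : ℝ) * B * (c:ℝ) ^ 4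 + (-1 / 6 : ℝ) * A + (1 / 3 : ℝ) * A * (c:ℝ) + (-1 / 4 : ℝ) * A * (c:ℝ) ^ 2 + (1 / 12 : ℝ) * A * (c:ℝ) ^ 3 + (-1 / 24 : ℝ) * A * (c:ℝ) ^ 4) * (n : ℝ) ^ 4) := by
    funext n
    rw [key c hc A B n]
    ring
  rw [heq]
  exact (((mono_bigO 1 (by norm_num) _).add (mono_bigO 2 (by norm_num) _)).add
    (mono_bigO 3 (by norm_num) _)).add (mono_bigO 4 (by norm_num) _)
end

section
/- For every integer c ≥ 5 and all real numbers A and B, the function n ↦ Σ_{(k,l)} (1/6)·[(4k+3l−cn−2)³·(A−B) + 3·(4k+3l−cn−2)²·(cn−3k−2l+1)·A + 3·(4k+3l−cn−2)·(cn−3k−2l+1)²·A] − (f₁·A + f₂·B)·n⁵ is O(n⁴) as n → ∞, where the sum is over pairs of natural numbers (k,l) with k ≤ n, l ≤ cn−3k, and 4k+3l ≥ cn+2, and where f₁ = (5/81)c⁴ − (47/162)c³ + (229/324)c² − (145/162)c + 305/648 and f₂ = −(2/9)c⁴ + (10/9)c³ − (25/9)c² + (125/36)c − 125/72. -/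
open Finset Filter Asymptotics

noncomputable section Aux7

/-- Closed form for `∑_{l=0}^{x} (a₀ + a₁ l + a₂ l² + a₃ l³)`. -/
def phi7 (a₀ a₁ a₂ a₃ x : ℝ) : ℝ :=
  a₀*(x+1) + a₁*(x*(x+1)/2) + a₂*(x*(x+1)*(2*x+1)/6) + a₃*(x*(x+1)/2)^2

def A0 (cr nr kr A B : ℝ) : ℝ :=
  (A*((kr-1)^3 - (cr*nr-3*kr+1)^3) - B*(4*kr-cr*nr-2)^3)/6

def A1 (cr nr kr A B : ℝ) : ℝ :=
  (A*(kr-1)^2 + 2*A*(cr*nr-3*kr+1)^2 - 3*B*(4*kr-cr*nr-2)^2)/2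

def A2 (cr nr kr A B : ℝ) : ℝ :=
  (A*(kr-1) - 4*A*(cr*nr-3*kr+1) - 9*B*(4*kr-cr*nr-2))/2

def A3 (A B : ℝ) : ℝ := (3*A-9*B)/2

def CD7 (c : ℕ) (A B : ℝ) : ℝ :=
  (|A| *(1+((c:ℝ)+1)^3) + |B| *((c:ℝ)+6)^3)/6
  + ((|A| *(1+2*((c:ℝ)+1)^2) + 3*|B| *((c:ℝ)+6)^2)/2) * (((c:ℝ)+2)*1)
  + ((|A| *(1+4*((c:ℝ)+1)) + 9*|B| *((c:ℝ)+6))/2) * (((c:ℝ)+2)*1)^2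
  + ((3*|A|+9*|B|)/2) * (((c:ℝ)+2)*1)^3

def Dterm7 (c : ℕ) (A B : ℝ) (n k : ℕ) : ℝ :=
  phi7 (A0 (c:ℝ) (n:ℝ) (k:ℝ) A B) (A1 (c:ℝ) (n:ℝ) (k:ℝ) A B)
    (A2 (c:ℝ) (n:ℝ) (k:ℝ) A B) (A3 A B) (((c:ℝ)*(n:ℝ)+1-4*(k:ℝ))/3)
  - phi7 (A0 (c:ℝ) (n:ℝ) (k:ℝ) A B) (A1 (c:ℝ) (n:ℝ) (k:ℝ) A B)
      (A2 (c:ℝ) (n:ℝ) (k:ℝ) A B) (A3 A B) ((((c*n+1-4*k)/3 : ℕ)) : ℝ)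

lemma abs_sub7 (x y : ℝ) : |x - y| ≤ |x| + |y| := by
  calc |x - y| = |x + -y| := by ring_nf
    _ ≤ |x| + |-y| := abs_add_le _ _
    _ = |x| + |y| := by rw [abs_neg]

lemma sum_cubic7 (a₀ a₁ a₂ a₃ : ℝ) (N : ℕ) :
    ∑ l ∈ Finset.range (N+1), (a₀ + a₁*(l:ℝ) + a₂*(l:ℝ)^2 + a₃*(l:ℝ)^3)
      = phi7 a₀ a₁ a₂ a₃ (N:ℝ) := by
  induction N with
  | zero => rw [Finset.sum_range_one]; simp only [Nat.cast_zero, phi7]; ring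
  | succ n ih =>
      rw [Finset.sum_range_succ, ih]
      simp only [phi7]
      push_cast
      ring

lemma sum_quartic7 (a₀ a₁ a₂ a₃ a₄ : ℝ) (N : ℕ) :
    ∑ k ∈ Finset.range (N+1),
      (a₀ + a₁*(k:ℝ) + a₂*(k:ℝ)^2 + a₃*(k:ℝ)^3 + a₄*(k:ℝ)^4)
    = a₀*((N:ℝ)+1) + a₁*((N:ℝ)*((N:ℝ)+1)/2) + a₂*((N:ℝ)*((N:ℝ)+1)*(2*(N:ℝ)+1)/6)
      + a₃*((N:ℝ)*((N:ℝ)+1)/2)^2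
      + a₄*((N:ℝ)*((N:ℝ)+1)*(2*(N:ℝ)+1)*(3*(N:ℝ)^2+3*(N:ℝ)-1)/30) := by
  induction N with
  | zero => rw [Finset.sum_range_one]; simp only [Nat.cast_zero]; ring
  | succ n ih =>
      rw [Finset.sum_range_succ, ih]
      push_cast
      ring

lemma filter_split7 (c n k : ℕ) (hc : 5 ≤ c) (hk : k ≤ n) (f : ℕ → ℝ) :
    ∑ l ∈ (Finset.range (c*n - 3*k + 1)).filter (fun l : ℕ => c*n + 2 ≤ 4*k + 3*l), f l
    = ∑ l ∈ Finset.range (c*n - 3*k + 1), f l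
      - ∑ l ∈ Finset.range ((c*n + 1 - 4*k)/3 + 1), f l := by
  have h5 : 5*n ≤ c*n := mul_le_mul_left hc n
  rw [show c*n = 5*n + (c*n - 5*n) by omega]
  generalize c*n - 5*n = m
  have hset : (Finset.range (5*n + m - 3*k + 1)).filter
      (fun l : ℕ => ¬ (5*n + m + 2 ≤ 4*k + 3*l))
      = Finset.range ((5*n + m + 1 - 4*k)/3 + 1) := by
    ext l
    simp only [Finset.mem_filter, Finset.mem_range, not_le]
    omega
  have hsplit := Finset.sum_filter_add_sum_filter_not (Finset.range (5*n + m - 3*k + 1))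
    (fun l : ℕ => 5*n + m + 2 ≤ 4*k + 3*l) f
  rw [hset] at hsplit
  linarith

lemma inner_eval7 (c n k N : ℕ) (A B : ℝ) :
    ∑ l ∈ Finset.range (N + 1),
      (1 / 6 : ℝ) *
        (((4 * (k : ℤ) + 3 * (l : ℤ) - (c : ℤ) * (n : ℤ) - 2 : ℤ) : ℝ) ^ 3 * (A - B)
          + 3 * ((4 * (k : ℤ) + 3 * (l : ℤ) - (c : ℤ) * (n : ℤ) - 2 : ℤ) : ℝ) ^ 2
              * (((c : ℤ) * (n : ℤ) - 3 * (k : ℤ) - 2 * (l : ℤ) + 1 : ℤ) : ℝ) * A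
          + 3 * ((4 * (k : ℤ) + 3 * (l : ℤ) - (c : ℤ) * (n : ℤ) - 2 : ℤ) : ℝ)
              * (((c : ℤ) * (n : ℤ) - 3 * (k : ℤ) - 2 * (l : ℤ) + 1 : ℤ) : ℝ) ^ 2 * A)
    = phi7 (A0 (c:ℝ) (n:ℝ) (k:ℝ) A B) (A1 (c:ℝ) (n:ℝ) (k:ℝ) A B)
        (A2 (c:ℝ) (n:ℝ) (k:ℝ) A B) (A3 A B) (N:ℝ) := by
  rw [← sum_cubic7]
  refine Finset.sum_congr rfl fun l _ => ?_
  simp only [A0, A1, A2, A3]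
  push_cast
  ring

lemma phi_diff7 (a₀ a₁ a₂ a₃ x y R : ℝ) (hx : 0 ≤ x) (hy : 0 ≤ y)
    (hxR : x ≤ R) (hyR : y ≤ R) (hxy : |x - y| ≤ 1) :
    |phi7 a₀ a₁ a₂ a₃ x - phi7 a₀ a₁ a₂ a₃ y|
      ≤ |a₀| + |a₁| *(R+1) + |a₂| *(R+1)^2 + |a₃| *(R+1)^3 := by
  have hR : 0 ≤ R := le_trans hx hxR
  have hid : phi7 a₀ a₁ a₂ a₃ x - phi7 a₀ a₁ a₂ a₃ y
      = (x - y) * (a₀ + a₁*((x+y+1)/2) + a₂*((2*(x^2+x*y+y^2)+3*(x+y)+1)/6)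
          + a₃*(((x+y+1)*(x*(x+1)+y*(y+1)))/4)) := by
    simp only [phi7]; ring
  rw [hid, abs_mul]
  have hx2 : x^2 ≤ R^2 := by nlinarith
  have hy2 : y^2 ≤ R^2 := by nlinarith
  have hxy2 : x*y ≤ R^2 := by nlinarith
  have t1 : |a₁*((x+y+1)/2)| ≤ |a₁| *(R+1) := by
    rw [abs_mul, abs_of_nonneg (by linarith : (0:ℝ) ≤ (x+y+1)/2)]
    exact mul_le_mul_of_nonneg_left (by linarith) (abs_nonneg a₁)
  have t2 : |a₂*((2*(x^2+x*y+y^2)+3*(x+y)+1)/6)| ≤ |a₂| *(R+1)^2 := by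
    rw [abs_mul, abs_of_nonneg (by nlinarith : (0:ℝ) ≤ (2*(x^2+x*y+y^2)+3*(x+y)+1)/6)]
    exact mul_le_mul_of_nonneg_left (by nlinarith) (abs_nonneg a₂)
  have t3 : |a₃*(((x+y+1)*(x*(x+1)+y*(y+1)))/4)| ≤ |a₃| *(R+1)^3 := by
    rw [abs_mul, abs_of_nonneg (by nlinarith : (0:ℝ) ≤ ((x+y+1)*(x*(x+1)+y*(y+1)))/4)]
    exact mul_le_mul_of_nonneg_left (by nlinarith) (abs_nonneg a₃)
  have habs : |a₀ + a₁*((x+y+1)/2) + a₂*((2*(x^2+x*y+y^2)+3*(x+y)+1)/6)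
      + a₃*(((x+y+1)*(x*(x+1)+y*(y+1)))/4)|
      ≤ |a₀| + |a₁*((x+y+1)/2)| + |a₂*((2*(x^2+x*y+y^2)+3*(x+y)+1)/6)|
        + |a₃*(((x+y+1)*(x*(x+1)+y*(y+1)))/4)| := by
    calc _ ≤ |a₀ + a₁*((x+y+1)/2) + a₂*((2*(x^2+x*y+y^2)+3*(x+y)+1)/6)|
            + |a₃*(((x+y+1)*(x*(x+1)+y*(y+1)))/4)| := abs_add_le _ _
      _ ≤ _ := by
          have h1 := abs_add_le (a₀ + a₁*((x+y+1)/2)) (a₂*((2*(x^2+x*y+y^2)+3*(x+y)+1)/6))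
          have h2 := abs_add_le a₀ (a₁*((x+y+1)/2))
          linarith
  calc |x-y| * |a₀ + a₁*((x+y+1)/2) + a₂*((2*(x^2+x*y+y^2)+3*(x+y)+1)/6)
        + a₃*(((x+y+1)*(x*(x+1)+y*(y+1)))/4)|
      ≤ 1 * (|a₀| + |a₁| *(R+1) + |a₂| *(R+1)^2 + |a₃| *(R+1)^3) := by
        apply mul_le_mul hxy _ (abs_nonneg _) (by norm_num)
        linarith [habs, t1, t2, t3]
    _ = _ := one_mul _

lemma A0_bound7 (c n k : ℕ) (A B : ℝ) (hc : 5 ≤ c) (hk : k ≤ n) :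
    |A0 (c:ℝ) (n:ℝ) (k:ℝ) A B| ≤
      ((|A| *(1+((c:ℝ)+1)^3) + |B| *((c:ℝ)+6)^3)/6) * ((n:ℝ)+1)^3 := by
  have hc5 : (5:ℝ) ≤ (c:ℝ) := by exact_mod_cast hc
  have hkn : (k:ℝ) ≤ (n:ℝ) := by exact_mod_cast hk
  have hk0 : (0:ℝ) ≤ (k:ℝ) := Nat.cast_nonneg k
  have hn0 : (0:ℝ) ≤ (n:ℝ) := Nat.cast_nonneg n
  have hcn : 5*(n:ℝ) ≤ (c:ℝ)*(n:ℝ) := mul_le_mul_of_nonneg_right hc5 hn0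
  have h1 : |(k:ℝ)-1| ≤ (n:ℝ)+1 := by rw [abs_le]; constructor <;> linarith
  have h2 : |(c:ℝ)*(n:ℝ)-3*(k:ℝ)+1| ≤ ((c:ℝ)+1)*((n:ℝ)+1) := by
    rw [abs_le]; constructor <;> nlinarith
  have h3 : |4*(k:ℝ)-(c:ℝ)*(n:ℝ)-2| ≤ ((c:ℝ)+6)*((n:ℝ)+1) := by
    rw [abs_le]; constructor <;> nlinarith
  have h1' : |((k:ℝ)-1)^3| ≤ ((n:ℝ)+1)^3 := by
    rw [abs_pow]; exact pow_le_pow_left₀ (abs_nonneg _) h1 3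
  have h2' : |((c:ℝ)*(n:ℝ)-3*(k:ℝ)+1)^3| ≤ (((c:ℝ)+1)*((n:ℝ)+1))^3 := by
    rw [abs_pow]; exact pow_le_pow_left₀ (abs_nonneg _) h2 3
  have h3' : |(4*(k:ℝ)-(c:ℝ)*(n:ℝ)-2)^3| ≤ (((c:ℝ)+6)*((n:ℝ)+1))^3 := by
    rw [abs_pow]; exact pow_le_pow_left₀ (abs_nonneg _) h3 3
  have t1 := abs_sub7 (A*(((k:ℝ)-1)^3 - ((c:ℝ)*(n:ℝ)-3*(k:ℝ)+1)^3))
    (B*(4*(k:ℝ)-(c:ℝ)*(n:ℝ)-2)^3)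
  rw [abs_mul, abs_mul] at t1
  have t2 := abs_sub7 (((k:ℝ)-1)^3) (((c:ℝ)*(n:ℝ)-3*(k:ℝ)+1)^3)
  have u1 : |A| *|((k:ℝ)-1)^3 - ((c:ℝ)*(n:ℝ)-3*(k:ℝ)+1)^3|
      ≤ |A| *(((n:ℝ)+1)^3 + (((c:ℝ)+1)*((n:ℝ)+1))^3) :=
    mul_le_mul_of_nonneg_left (by linarith) (abs_nonneg A)
  have u2 : |B| *|(4*(k:ℝ)-(c:ℝ)*(n:ℝ)-2)^3| ≤ |B| *(((c:ℝ)+6)*((n:ℝ)+1))^3 :=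
    mul_le_mul_of_nonneg_left h3' (abs_nonneg B)
  have main : |A*(((k:ℝ)-1)^3 - ((c:ℝ)*(n:ℝ)-3*(k:ℝ)+1)^3)
      - B*(4*(k:ℝ)-(c:ℝ)*(n:ℝ)-2)^3|
      ≤ |A| *(((n:ℝ)+1)^3 + (((c:ℝ)+1)*((n:ℝ)+1))^3) + |B| *(((c:ℝ)+6)*((n:ℝ)+1))^3 := by
    linarith
  calc |A0 (c:ℝ) (n:ℝ) (k:ℝ) A B|
      = |A*(((k:ℝ)-1)^3 - ((c:ℝ)*(n:ℝ)-3*(k:ℝ)+1)^3)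
          - B*(4*(k:ℝ)-(c:ℝ)*(n:ℝ)-2)^3|/6 := by
        simp only [A0]; rw [abs_div]; norm_num
    _ ≤ (|A| *(((n:ℝ)+1)^3 + (((c:ℝ)+1)*((n:ℝ)+1))^3)
          + |B| *(((c:ℝ)+6)*((n:ℝ)+1))^3)/6 := by linarith
    _ = ((|A| *(1+((c:ℝ)+1)^3) + |B| *((c:ℝ)+6)^3)/6) * ((n:ℝ)+1)^3 := by ring

lemma A1_bound7 (c n k : ℕ) (A B : ℝ) (hc : 5 ≤ c) (hk : k ≤ n) :
    |A1 (c:ℝ) (n:ℝ) (k:ℝ) A B| ≤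
      ((|A| *(1+2*((c:ℝ)+1)^2) + 3*|B| *((c:ℝ)+6)^2)/2) * ((n:ℝ)+1)^2 := by
  have hc5 : (5:ℝ) ≤ (c:ℝ) := by exact_mod_cast hc
  have hkn : (k:ℝ) ≤ (n:ℝ) := by exact_mod_cast hk
  have hk0 : (0:ℝ) ≤ (k:ℝ) := Nat.cast_nonneg k
  have hn0 : (0:ℝ) ≤ (n:ℝ) := Nat.cast_nonneg n
  have hcn : 5*(n:ℝ) ≤ (c:ℝ)*(n:ℝ) := mul_le_mul_of_nonneg_right hc5 hn0
  have h1 : |(k:ℝ)-1| ≤ (n:ℝ)+1 := by rw [abs_le]; constructor <;> linarith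
  have h2 : |(c:ℝ)*(n:ℝ)-3*(k:ℝ)+1| ≤ ((c:ℝ)+1)*((n:ℝ)+1) := by
    rw [abs_le]; constructor <;> nlinarith
  have h3 : |4*(k:ℝ)-(c:ℝ)*(n:ℝ)-2| ≤ ((c:ℝ)+6)*((n:ℝ)+1) := by
    rw [abs_le]; constructor <;> nlinarith
  have h1' : |((k:ℝ)-1)^2| ≤ ((n:ℝ)+1)^2 := by
    rw [abs_pow]; exact pow_le_pow_left₀ (abs_nonneg _) h1 2
  have h2' : |((c:ℝ)*(n:ℝ)-3*(k:ℝ)+1)^2| ≤ (((c:ℝ)+1)*((n:ℝ)+1))^2 := by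
    rw [abs_pow]; exact pow_le_pow_left₀ (abs_nonneg _) h2 2
  have h3' : |(4*(k:ℝ)-(c:ℝ)*(n:ℝ)-2)^2| ≤ (((c:ℝ)+6)*((n:ℝ)+1))^2 := by
    rw [abs_pow]; exact pow_le_pow_left₀ (abs_nonneg _) h3 2
  have t1 := abs_add_le (A*((k:ℝ)-1)^2) (2*A*((c:ℝ)*(n:ℝ)-3*(k:ℝ)+1)^2)
  have t2 := abs_sub7 (A*((k:ℝ)-1)^2 + 2*A*((c:ℝ)*(n:ℝ)-3*(k:ℝ)+1)^2)
    (3*B*(4*(k:ℝ)-(c:ℝ)*(n:ℝ)-2)^2)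
  have e1 : |A*((k:ℝ)-1)^2| = |A| *|((k:ℝ)-1)^2| := abs_mul _ _
  have e2 : |2*A*((c:ℝ)*(n:ℝ)-3*(k:ℝ)+1)^2| = 2*|A| *|((c:ℝ)*(n:ℝ)-3*(k:ℝ)+1)^2| := by
    rw [abs_mul, abs_mul]; norm_num
  have e3 : |3*B*(4*(k:ℝ)-(c:ℝ)*(n:ℝ)-2)^2| = 3*|B| *|(4*(k:ℝ)-(c:ℝ)*(n:ℝ)-2)^2| := by
    rw [abs_mul, abs_mul]; norm_num
  have u1 : |A| *|((k:ℝ)-1)^2| ≤ |A| *((n:ℝ)+1)^2 :=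
    mul_le_mul_of_nonneg_left h1' (abs_nonneg A)
  have u2 : 2*|A| *|((c:ℝ)*(n:ℝ)-3*(k:ℝ)+1)^2| ≤ 2*|A| *(((c:ℝ)+1)*((n:ℝ)+1))^2 :=
    mul_le_mul_of_nonneg_left h2' (by positivity)
  have u3 : 3*|B| *|(4*(k:ℝ)-(c:ℝ)*(n:ℝ)-2)^2| ≤ 3*|B| *(((c:ℝ)+6)*((n:ℝ)+1))^2 :=
    mul_le_mul_of_nonneg_left h3' (by positivity)
  calc |A1 (c:ℝ) (n:ℝ) (k:ℝ) A B|
      = |A*((k:ℝ)-1)^2 + 2*A*((c:ℝ)*(n:ℝ)-3*(k:ℝ)+1)^2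
          - 3*B*(4*(k:ℝ)-(c:ℝ)*(n:ℝ)-2)^2|/2 := by
        simp only [A1]; rw [abs_div]; norm_num
    _ ≤ (|A| *((n:ℝ)+1)^2 + 2*|A| *(((c:ℝ)+1)*((n:ℝ)+1))^2
          + 3*|B| *(((c:ℝ)+6)*((n:ℝ)+1))^2)/2 := by
        rw [e1, e2] at t1
        rw [e3] at t2
        linarith
    _ = ((|A| *(1+2*((c:ℝ)+1)^2) + 3*|B| *((c:ℝ)+6)^2)/2) * ((n:ℝ)+1)^2 := by ring

lemma A2_bound7 (c n k : ℕ) (A B : ℝ) (hc : 5 ≤ c) (hk : k ≤ n) :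
    |A2 (c:ℝ) (n:ℝ) (k:ℝ) A B| ≤
      ((|A| *(1+4*((c:ℝ)+1)) + 9*|B| *((c:ℝ)+6))/2) * ((n:ℝ)+1) := by
  have hc5 : (5:ℝ) ≤ (c:ℝ) := by exact_mod_cast hc
  have hkn : (k:ℝ) ≤ (n:ℝ) := by exact_mod_cast hk
  have hk0 : (0:ℝ) ≤ (k:ℝ) := Nat.cast_nonneg k
  have hn0 : (0:ℝ) ≤ (n:ℝ) := Nat.cast_nonneg n
  have hcn : 5*(n:ℝ) ≤ (c:ℝ)*(n:ℝ) := mul_le_mul_of_nonneg_right hc5 hn0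
  have h1 : |(k:ℝ)-1| ≤ (n:ℝ)+1 := by rw [abs_le]; constructor <;> linarith
  have h2 : |(c:ℝ)*(n:ℝ)-3*(k:ℝ)+1| ≤ ((c:ℝ)+1)*((n:ℝ)+1) := by
    rw [abs_le]; constructor <;> nlinarith
  have h3 : |4*(k:ℝ)-(c:ℝ)*(n:ℝ)-2| ≤ ((c:ℝ)+6)*((n:ℝ)+1) := by
    rw [abs_le]; constructor <;> nlinarith
  have t1 := abs_sub7 (A*((k:ℝ)-1)) (4*A*((c:ℝ)*(n:ℝ)-3*(k:ℝ)+1))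
  have t2 := abs_sub7 (A*((k:ℝ)-1) - 4*A*((c:ℝ)*(n:ℝ)-3*(k:ℝ)+1))
    (9*B*(4*(k:ℝ)-(c:ℝ)*(n:ℝ)-2))
  have e1 : |A*((k:ℝ)-1)| = |A| *|(k:ℝ)-1| := abs_mul _ _
  have e2 : |4*A*((c:ℝ)*(n:ℝ)-3*(k:ℝ)+1)| = 4*|A| *|(c:ℝ)*(n:ℝ)-3*(k:ℝ)+1| := by
    rw [abs_mul, abs_mul]; norm_num
  have e3 : |9*B*(4*(k:ℝ)-(c:ℝ)*(n:ℝ)-2)| = 9*|B| *|4*(k:ℝ)-(c:ℝ)*(n:ℝ)-2| := by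
    rw [abs_mul, abs_mul]; norm_num
  have u1 : |A| *|(k:ℝ)-1| ≤ |A| *((n:ℝ)+1) :=
    mul_le_mul_of_nonneg_left h1 (abs_nonneg A)
  have u2 : 4*|A| *|(c:ℝ)*(n:ℝ)-3*(k:ℝ)+1| ≤ 4*|A| *(((c:ℝ)+1)*((n:ℝ)+1)) :=
    mul_le_mul_of_nonneg_left h2 (by positivity)
  have u3 : 9*|B| *|4*(k:ℝ)-(c:ℝ)*(n:ℝ)-2| ≤ 9*|B| *(((c:ℝ)+6)*((n:ℝ)+1)) :=
    mul_le_mul_of_nonneg_left h3 (by positivity)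
  calc |A2 (c:ℝ) (n:ℝ) (k:ℝ) A B|
      = |A*((k:ℝ)-1) - 4*A*((c:ℝ)*(n:ℝ)-3*(k:ℝ)+1)
          - 9*B*(4*(k:ℝ)-(c:ℝ)*(n:ℝ)-2)|/2 := by
        simp only [A2]; rw [abs_div]; norm_num
    _ ≤ (|A| *((n:ℝ)+1) + 4*|A| *(((c:ℝ)+1)*((n:ℝ)+1))
          + 9*|B| *(((c:ℝ)+6)*((n:ℝ)+1)))/2 := by
        rw [e1, e2] at t1
        rw [e3] at t2
        linarith
    _ = ((|A| *(1+4*((c:ℝ)+1)) + 9*|B| *((c:ℝ)+6))/2) * ((n:ℝ)+1) := by ring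

lemma A3_bound7 (A B : ℝ) : |A3 A B| ≤ (3*|A|+9*|B|)/2 := by
  have t := abs_sub7 (3*A) (9*B)
  have e1 : |3*A| = 3*|A| := by rw [abs_mul]; norm_num
  have e2 : |9*B| = 9*|B| := by rw [abs_mul]; norm_num
  calc |A3 A B| = |3*A-9*B|/2 := by simp only [A3]; rw [abs_div]; norm_num
    _ ≤ (3*|A|+9*|B|)/2 := by rw [e1, e2] at t; linarith

lemma Dbound7 (c n k : ℕ) (hc : 5 ≤ c) (hk : k ≤ n) (A B : ℝ) :
    |Dterm7 c A B n k| ≤ CD7 c A B * ((n:ℝ)+1)^3 := by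
  have hc5 : (5:ℝ) ≤ (c:ℝ) := by exact_mod_cast hc
  have hkn : (k:ℝ) ≤ (n:ℝ) := by exact_mod_cast hk
  have hk0 : (0:ℝ) ≤ (k:ℝ) := Nat.cast_nonneg k
  have hn0 : (0:ℝ) ≤ (n:ℝ) := Nat.cast_nonneg n
  have hcn : 5*(n:ℝ) ≤ (c:ℝ)*(n:ℝ) := mul_le_mul_of_nonneg_right hc5 hn0
  have h4 : 4*k ≤ c*n := le_trans (by omega : 4*k ≤ 5*n) (mul_le_mul_left hc n)
  have hdc : ((c*n+1-4*k : ℕ) : ℝ) = (c:ℝ)*(n:ℝ)+1-4*(k:ℝ) := by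
    rw [Nat.cast_sub (Nat.le_succ_of_le h4)]
    push_cast
    ring
  have hq1 : 3*((c*n+1-4*k)/3) ≤ c*n+1-4*k := by
    have h : ∀ d : ℕ, 3*(d/3) ≤ d := fun d => by omega
    exact h _
  have hq2 : c*n+1-4*k ≤ 3*((c*n+1-4*k)/3) + 2 := by
    have h : ∀ d : ℕ, d ≤ 3*(d/3)+2 := fun d => by omega
    exact h _
  have hq1' : 3*((((c*n+1-4*k)/3 : ℕ)) : ℝ) ≤ (c:ℝ)*(n:ℝ)+1-4*(k:ℝ) := by
    rw [← hdc]; exact_mod_cast hq1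
  have hq2' : (c:ℝ)*(n:ℝ)+1-4*(k:ℝ) ≤ 3*((((c*n+1-4*k)/3 : ℕ)) : ℝ) + 2 := by
    rw [← hdc]; exact_mod_cast hq2
  have h4' : 4*(k:ℝ) ≤ (c:ℝ)*(n:ℝ) := by exact_mod_cast h4
  have hx0 : (0:ℝ) ≤ ((c:ℝ)*(n:ℝ)+1-4*(k:ℝ))/3 := by linarith
  have hy0 : (0:ℝ) ≤ ((((c*n+1-4*k)/3 : ℕ)) : ℝ) := Nat.cast_nonneg _
  have hxR : ((c:ℝ)*(n:ℝ)+1-4*(k:ℝ))/3 ≤ (c:ℝ)*(n:ℝ)+1 := by linarith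
  have hyR : ((((c*n+1-4*k)/3 : ℕ)) : ℝ) ≤ (c:ℝ)*(n:ℝ)+1 := by linarith
  have hxy : |((c:ℝ)*(n:ℝ)+1-4*(k:ℝ))/3 - ((((c*n+1-4*k)/3 : ℕ)) : ℝ)| ≤ 1 := by
    rw [abs_le]; constructor <;> linarith
  have hphi := phi_diff7 (A0 (c:ℝ) (n:ℝ) (k:ℝ) A B) (A1 (c:ℝ) (n:ℝ) (k:ℝ) A B)
    (A2 (c:ℝ) (n:ℝ) (k:ℝ) A B) (A3 A B)
    (((c:ℝ)*(n:ℝ)+1-4*(k:ℝ))/3) ((((c*n+1-4*k)/3 : ℕ)) : ℝ) ((c:ℝ)*(n:ℝ)+1)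
    hx0 hy0 hxR hyR hxy
  have b0 := A0_bound7 c n k A B hc hk
  have b1 := A1_bound7 c n k A B hc hk
  have b2 := A2_bound7 c n k A B hc hk
  have b3 := A3_bound7 A B
  have hR1 : (c:ℝ)*(n:ℝ)+1+1 ≤ (((c:ℝ)+2)*1)*((n:ℝ)+1) := by nlinarith
  have hR0 : (0:ℝ) ≤ (c:ℝ)*(n:ℝ)+1+1 := by positivity
  calc |Dterm7 c A B n k|
      ≤ |A0 (c:ℝ) (n:ℝ) (k:ℝ) A B| + |A1 (c:ℝ) (n:ℝ) (k:ℝ) A B| *((c:ℝ)*(n:ℝ)+1+1)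
        + |A2 (c:ℝ) (n:ℝ) (k:ℝ) A B| *((c:ℝ)*(n:ℝ)+1+1)^2
        + |A3 A B| *((c:ℝ)*(n:ℝ)+1+1)^3 := by
        simp only [Dterm7]
        exact hphi
    _ ≤ ((|A| *(1+((c:ℝ)+1)^3) + |B| *((c:ℝ)+6)^3)/6) * ((n:ℝ)+1)^3
        + (((|A| *(1+2*((c:ℝ)+1)^2) + 3*|B| *((c:ℝ)+6)^2)/2) * ((n:ℝ)+1)^2)
            * ((((c:ℝ)+2)*1)*((n:ℝ)+1))
        + (((|A| *(1+4*((c:ℝ)+1)) + 9*|B| *((c:ℝ)+6))/2) * ((n:ℝ)+1))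
            * ((((c:ℝ)+2)*1)*((n:ℝ)+1))^2
        + ((3*|A|+9*|B|)/2) * ((((c:ℝ)+2)*1)*((n:ℝ)+1))^3 := by
        gcongr
    _ = CD7 c A B * ((n:ℝ)+1)^3 := by simp only [CD7]; ring

lemma err_isBigO7 (c : ℕ) (hc : 5 ≤ c) (A B : ℝ) :
    (fun n : ℕ => ∑ k ∈ Finset.range (n+1), Dterm7 c A B n k)
      =O[atTop] (fun n : ℕ => (n:ℝ)^4) := by
  rw [isBigO_iff]
  refine ⟨16 * CD7 c A B, ?_⟩
  filter_upwards [Filter.eventually_ge_atTop 1] with n hn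
  have h1 : (1:ℝ) ≤ (n:ℝ) := by exact_mod_cast hn
  have hCD0 : 0 ≤ CD7 c A B := by simp only [CD7]; positivity
  have hD : ∀ k ∈ Finset.range (n+1), ‖Dterm7 c A B n k‖ ≤ CD7 c A B * ((n:ℝ)+1)^3 := by
    intro k hk
    rw [Real.norm_eq_abs]
    exact Dbound7 c n k hc (Finset.mem_range_succ_iff.mp hk) A B
  have h2 : ((n:ℝ)+1) ≤ 2*(n:ℝ) := by linarith
  have h3 : ((n:ℝ)+1)^4 ≤ (2*(n:ℝ))^4 := pow_le_pow_left₀ (by positivity) h2 4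
  calc ‖∑ k ∈ Finset.range (n+1), Dterm7 c A B n k‖
      ≤ ∑ k ∈ Finset.range (n+1), ‖Dterm7 c A B n k‖ := norm_sum_le _ _
    _ ≤ (Finset.range (n+1)).card • (CD7 c A B * ((n:ℝ)+1)^3) :=
        Finset.sum_le_card_nsmul _ _ _ hD
    _ = ((n:ℝ)+1) * (CD7 c A B * ((n:ℝ)+1)^3) := by
        rw [Finset.card_range, nsmul_eq_mul]; push_cast; ring
    _ = CD7 c A B * ((n:ℝ)+1)^4 := by ring
    _ ≤ CD7 c A B * (2*(n:ℝ))^4 := mul_le_mul_of_nonneg_left h3 hCD0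
    _ = 16 * CD7 c A B * (n:ℝ)^4 := by ring
    _ = 16 * CD7 c A B * ‖(n:ℝ)^4‖ := by
        rw [Real.norm_eq_abs, abs_of_nonneg (by positivity : (0:ℝ) ≤ (n:ℝ)^4)]

lemma mono_term7 (e x y : ℝ) (hx : 0 ≤ x) (hxy : x ≤ y) :
    e * x ≤ |e| * y ∧ -(|e| * y) ≤ e * x := by
  have h1 : e*x ≤ |e| *x := mul_le_mul_of_nonneg_right (le_abs_self e) hx
  have h2 : |e| *x ≤ |e| *y := mul_le_mul_of_nonneg_left hxy (abs_nonneg e)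
  have h3 : -|e| *x ≤ e*x := mul_le_mul_of_nonneg_right (neg_abs_le e) hx
  constructor
  · linarith
  · linarith

lemma poly_isBigO7 (e0 e1 e2 e3 e4 : ℝ) :
    (fun n : ℕ => e0 + e1*(n:ℝ) + e2*(n:ℝ)^2 + e3*(n:ℝ)^3 + e4*(n:ℝ)^4) =O[atTop]
      (fun n : ℕ => (n:ℝ)^4) := by
  rw [isBigO_iff]
  refine ⟨|e0|+|e1|+|e2|+|e3|+|e4|, ?_⟩
  filter_upwards [Filter.eventually_ge_atTop 1] with n hn
  have h1 : (1:ℝ) ≤ (n:ℝ) := by exact_mod_cast hn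
  have h0 : (0:ℝ) ≤ (n:ℝ) := by linarith
  have p0 : (1:ℝ) ≤ (n:ℝ)^4 := by
    simpa using pow_le_pow_right₀ h1 (by norm_num : (0:ℕ) ≤ 4)
  have p1 : (n:ℝ) ≤ (n:ℝ)^4 := by
    simpa using pow_le_pow_right₀ h1 (by norm_num : (1:ℕ) ≤ 4)
  have p2 : (n:ℝ)^2 ≤ (n:ℝ)^4 := pow_le_pow_right₀ h1 (by norm_num)
  have p3 : (n:ℝ)^3 ≤ (n:ℝ)^4 := pow_le_pow_right₀ h1 (by norm_num)
  have p4 : (n:ℝ)^4 ≤ (n:ℝ)^4 := le_refl _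
  obtain ⟨u0, v0⟩ := mono_term7 e0 1 ((n:ℝ)^4) (by norm_num) p0
  obtain ⟨u1, v1⟩ := mono_term7 e1 ((n:ℝ)) ((n:ℝ)^4) h0 p1
  obtain ⟨u2, v2⟩ := mono_term7 e2 ((n:ℝ)^2) ((n:ℝ)^4) (by positivity) p2
  obtain ⟨u3, v3⟩ := mono_term7 e3 ((n:ℝ)^3) ((n:ℝ)^4) (by positivity) p3
  obtain ⟨u4, v4⟩ := mono_term7 e4 ((n:ℝ)^4) ((n:ℝ)^4) (by positivity) p4
  rw [Real.norm_eq_abs, Real.norm_eq_abs, abs_of_nonneg (by positivity : (0:ℝ) ≤ (n:ℝ)^4),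
    abs_le]
  constructor
  · linarith
  · linarith

end Aux7

theorem stmt_7 (c : ℕ) (hc : 5 ≤ c) (A B : ℝ) :
    (fun n : ℕ =>
      (∑ k ∈ Finset.range (n + 1),
        ∑ l ∈ (Finset.range (c * n - 3 * k + 1)).filter
            (fun l : ℕ => c * n + 2 ≤ 4 * k + 3 * l),
          (1 / 6 : ℝ) *
            (((4 * (k : ℤ) + 3 * (l : ℤ) - (c : ℤ) * (n : ℤ) - 2 : ℤ) : ℝ) ^ 3 * (A - B)
              + 3 * ((4 * (k : ℤ) + 3 * (l : ℤ) - (c : ℤ) * (n : ℤ) - 2 : ℤ) : ℝ) ^ 2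
                  * (((c : ℤ) * (n : ℤ) - 3 * (k : ℤ) - 2 * (l : ℤ) + 1 : ℤ) : ℝ) * A
              + 3 * ((4 * (k : ℤ) + 3 * (l : ℤ) - (c : ℤ) * (n : ℤ) - 2 : ℤ) : ℝ)
                  * (((c : ℤ) * (n : ℤ) - 3 * (k : ℤ) - 2 * (l : ℤ) + 1 : ℤ) : ℝ) ^ 2 * A))
        - (((5 / 81 : ℝ) * (c : ℝ) ^ 4 - (47 / 162) * (c : ℝ) ^ 3 + (229 / 324) * (c : ℝ) ^ 2
              - (145 / 162) * (c : ℝ) + 305 / 648) * A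
            + (-(2 / 9 : ℝ) * (c : ℝ) ^ 4 + (10 / 9) * (c : ℝ) ^ 3 - (25 / 9) * (c : ℝ) ^ 2
              + (125 / 36) * (c : ℝ) - 125 / 72) * B) * (n : ℝ) ^ 5)
      =O[atTop] (fun n : ℕ => (n : ℝ) ^ 4) := by
  have key : ∀ n : ℕ,
      (∑ k ∈ Finset.range (n + 1),
        ∑ l ∈ (Finset.range (c * n - 3 * k + 1)).filter
            (fun l : ℕ => c * n + 2 ≤ 4 * k + 3 * l),
          (1 / 6 : ℝ) *
            (((4 * (k : ℤ) + 3 * (l : ℤ) - (c : ℤ) * (n : ℤ) - 2 : ℤ) : ℝ) ^ 3 * (A - B)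
              + 3 * ((4 * (k : ℤ) + 3 * (l : ℤ) - (c : ℤ) * (n : ℤ) - 2 : ℤ) : ℝ) ^ 2
                  * (((c : ℤ) * (n : ℤ) - 3 * (k : ℤ) - 2 * (l : ℤ) + 1 : ℤ) : ℝ) * A
              + 3 * ((4 * (k : ℤ) + 3 * (l : ℤ) - (c : ℤ) * (n : ℤ) - 2 : ℤ) : ℝ)
                  * (((c : ℤ) * (n : ℤ) - 3 * (k : ℤ) - 2 * (l : ℤ) + 1 : ℤ) : ℝ) ^ 2 * A))
      = (∑ k ∈ Finset.range (n + 1),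
          (((1/81)*A + (-1/9)*(n:ℝ)*(c:ℝ)*B + (-1/81)*(n:ℝ)*(c:ℝ)*A
              + (1/6)*(n:ℝ)^2*(c:ℝ)^2*B + (2/9)*(n:ℝ)^3*(c:ℝ)^3*B
              + (-13/162)*(n:ℝ)^3*(c:ℝ)^3*A + (-2/9)*(n:ℝ)^4*(c:ℝ)^4*B
              + (5/81)*(n:ℝ)^4*(c:ℝ)^4*A)
            + ((5/18)*B + (1/81)*A + (-5/6)*(n:ℝ)*(c:ℝ)*B + (1/12)*(n:ℝ)*(c:ℝ)*A
              + (-5/3)*(n:ℝ)^2*(c:ℝ)^2*B + (53/108)*(n:ℝ)^2*(c:ℝ)^2*A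
              + (20/9)*(n:ℝ)^3*(c:ℝ)^3*B + (-47/81)*(n:ℝ)^3*(c:ℝ)^3*A)*(k:ℝ)
            + ((25/24)*B + (-5/24)*A + (25/6)*(n:ℝ)*(c:ℝ)*B + (-107/108)*(n:ℝ)*(c:ℝ)*A
              + (-25/3)*(n:ℝ)^2*(c:ℝ)^2*B + (229/108)*(n:ℝ)^2*(c:ℝ)^2*A)*(k:ℝ)^2
            + ((-125/36)*B + (215/324)*A + (125/9)*(n:ℝ)*(c:ℝ)*B
              + (-290/81)*(n:ℝ)*(c:ℝ)*A)*(k:ℝ)^3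
            + ((-625/72)*B + (1525/648)*A)*(k:ℝ)^4))
        + ∑ k ∈ Finset.range (n + 1), Dterm7 c A B n k := by
    intro n
    rw [← Finset.sum_add_distrib]
    refine Finset.sum_congr rfl fun k hk => ?_
    have hk' : k ≤ n := Finset.mem_range_succ_iff.mp hk
    rw [filter_split7 c n k hc hk', inner_eval7, inner_eval7]
    have h3k : 3*k ≤ c*n := le_trans (by omega : 3*k ≤ 5*n) (mul_le_mul_left hc n)
    have hM : ((c*n - 3*k : ℕ) : ℝ) = (c:ℝ)*(n:ℝ) - 3*(k:ℝ) := by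
      rw [Nat.cast_sub h3k]; push_cast; ring
    rw [hM]
    simp only [Dterm7, phi7, A0, A1, A2, A3]
    ring
  have main : (fun n : ℕ =>
      (((1/81)*A)
        + ((65/108)*B + (-23/243)*A + (-1/9)*(c:ℝ)*B + (-1/81)*(c:ℝ)*A)*(n:ℝ)
        + ((-5/24)*B + (11/162)*A + (1/6)*(c:ℝ)*B + (-11/81)*(c:ℝ)*A
            + (1/6)*(c:ℝ)^2*B)*(n:ℝ)^2
        + ((-925/216)*B + (2035/1944)*A + (185/36)*(c:ℝ)*B + (-437/324)*(c:ℝ)*A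
            + (-37/18)*(c:ℝ)^2*B + (97/162)*(c:ℝ)^2*A + (2/9)*(c:ℝ)^3*B
            + (-13/162)*(c:ℝ)^3*A)*(n:ℝ)^3
        + ((-125/24)*B + (145/108)*A + (25/3)*(c:ℝ)*B + (-229/108)*(c:ℝ)*A
            + (-5)*(c:ℝ)^2*B + (47/36)*(c:ℝ)^2*A + (4/3)*(c:ℝ)^3*B
            + (-10/27)*(c:ℝ)^3*A + (-2/9)*(c:ℝ)^4*B + (5/81)*(c:ℝ)^4*A)*(n:ℝ)^4)
      + ∑ k ∈ Finset.range (n+1), Dterm7 c A B n k)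
      =O[atTop] (fun n : ℕ => (n:ℝ)^4) :=
    (poly_isBigO7 _ _ _ _ _).add (err_isBigO7 c hc A B)
  refine main.congr' (Filter.Eventually.of_forall fun n => ?_) Filter.EventuallyEq.rfl
  dsimp only
  rw [key n, sum_quartic7]
  ring
end

section
/- For all real numbers A and B, the function n ↦ Σ_{k=0}^{n} Σ_{l=0}^{3n−3k} (1/24)·[ (5s⁴ + 12s³t + 6s²t² + 4st³)·B − (s⁴ + 4s³t + 6s²t² + 4st³)·A ] − ((23629/60)·B − (1213/12)·A)·n⁶ is O(n⁵) as n → ∞, where s = 9n−4k−3l and t = k+l (computed in the integers and cast to the reals). -/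
open Finset Filter Asymptotics

noncomputable def IBf (a b m : ℝ) : ℝ := (-(41/240) : ℝ) * m + (41/24 : ℝ) * m ^ 3 + (-(41/16) : ℝ) * m ^ 4 + (41/40 : ℝ) * m ^ 5 + (-(21/8) : ℝ) * b * m ^ 2 + (21/4 : ℝ) * b * m ^ 3 + (-(21/8) : ℝ) * b * m ^ 4 + (1/8 : ℝ) * b ^ 2 * m + (-(3/8) : ℝ) * b ^ 2 * m ^ 2 + (1/4 : ℝ) * b ^ 2 * m ^ 3 + (1/4 : ℝ) * b ^ 3 * m + (-(1/4) : ℝ) * b ^ 3 * m ^ 2 + (-(31/12) : ℝ) * a * m ^ 2 + (31/6 : ℝ) * a * m ^ 3 + (-(31/12) : ℝ) * a * m ^ 4 + (11/6 : ℝ) * a * b * m + (-(11/2) : ℝ) * a * b * m ^ 2 + (11/3 : ℝ) * a * b * m ^ 3 + (1/2 : ℝ) * a * b ^ 2 * m + (-(1/2) : ℝ) * a * b ^ 2 * m ^ 2 + (1/6 : ℝ) * a * b ^ 3 * m + (7/6 : ℝ) * a ^ 2 * m + (-(7/2) : ℝ) * a ^ 2 * m ^ 2 + (7/3 : ℝ)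 * a ^ 2 * m ^ 3 + (2 : ℝ) * a ^ 2 * b * m + (-(2) : ℝ) * a ^ 2 * b * m ^ 2 + (1/4 : ℝ) * a ^ 2 * b ^ 2 * m + (1 : ℝ) * a ^ 3 * m + (-(1) : ℝ) * a ^ 3 * m ^ 2 + (1/2 : ℝ) * a ^ 3 * b * m + (5/24 : ℝ) * a ^ 4 * m

noncomputable def IAf (a b m : ℝ) : ℝ := (-(1/48) : ℝ) * m + (5/24 : ℝ) * m ^ 3 + (-(5/16) : ℝ) * m ^ 4 + (1/8 : ℝ) * m ^ 5 + (-(3/8) : ℝ) * b * m ^ 2 + (3/4 : ℝ) * b * m ^ 3 + (-(3/8) : ℝ) * b * m ^ 4 + (1/8 : ℝ) * b ^ 2 * m + (-(3/8) : ℝ) * b ^ 2 * m ^ 2 + (1/4 : ℝ) * b ^ 2 * m ^ 3 + (1/4 : ℝ) * b ^ 3 * m + (-(1/4) : ℝ) * b ^ 3 * m ^ 2 + (-(1/3) : ℝ) * a * m ^ 2 + (2/3 : ℝ) * a * m ^ 3 + (-(1/3) : ℝ) * a * m ^ 4 + (1/3 : ℝ) * a * b * m + (-(1) : ℝ) * a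 * b * m ^ 2 + (2/3 : ℝ) * a * b * m ^ 3 + (1/2 : ℝ) * a * b ^ 2 * m + (-(1/2) : ℝ) * a * b ^ 2 * m ^ 2 + (1/6 : ℝ) * a * b ^ 3 * m + (1/6 : ℝ) * a ^ 2 * m + (-(1/2) : ℝ) * a ^ 2 * m ^ 2 + (1/3 : ℝ) * a ^ 2 * m ^ 3 + (1/2 : ℝ) * a ^ 2 * b * m + (-(1/2) : ℝ) * a ^ 2 * b * m ^ 2 + (1/4 : ℝ) * a ^ 2 * b ^ 2 * m + (1/6 : ℝ) * a ^ 3 * m + (-(1/6) : ℝ) * a ^ 3 * m ^ 2 + (1/6 : ℝ) * a ^ 3 * b * m + (1/24 : ℝ) * a ^ 4 * m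

noncomputable def PBf (c m : ℝ) : ℝ := (-(763/720) : ℝ) * m + (53/20 : ℝ) * m * c + (1323/8 : ℝ) * m * c ^ 2 + (1743/2 : ℝ) * m * c ^ 3 + (1647 : ℝ) * m * c ^ 4 + (20169/20 : ℝ) * m * c ^ 5 + (-(83/60) : ℝ) * m ^ 2 + (-(247/8) : ℝ) * m ^ 2 * c + (-(7959/16) : ℝ) * m ^ 2 * c ^ 2 + (-(9855/8) : ℝ) * m ^ 2 * c ^ 3 + (-(15417/16) : ℝ) * m ^ 2 * c ^ 4 + (979/72 : ℝ) * m ^ 3 + (459/8 : ℝ) * m ^ 3 * c + (3759/8 : ℝ) * m ^ 3 * c ^ 2 + (1923/4 : ℝ) * m ^ 3 * c ^ 3 + (-(493/24) : ℝ) * m ^ 4 + (-(607/16) : ℝ) * m ^ 4 * c + (-(2205/16) : ℝ) * m ^ 4 * c ^ 2 + (2801/240 : ℝ) * m ^ 5 + (331/40 : ℝ) * m ^ 5 * c + (-(137/60) : ℝ) * m ^ 6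

noncomputable def PAf (c m : ℝ) : ℝ := (-(19/144) : ℝ) * m + (1/3 : ℝ) * m * c + (27 : ℝ) * m * c ^ 2 + (147 : ℝ) * m * c ^ 3 + (2727/8 : ℝ) * m * c ^ 4 + (243 : ℝ) * m * c ^ 5 + (-(1/6) : ℝ) * m ^ 2 + (-(39/8) : ℝ) * m ^ 2 * c + (-(1329/16) : ℝ) * m ^ 2 * c ^ 2 + (-(1701/8) : ℝ) * m ^ 2 * c ^ 3 + (-(3267/16) : ℝ) * m ^ 2 * c ^ 4 + (61/36 : ℝ) * m ^ 3 + (235/24 : ℝ) * m ^ 3 * c + (639/8 : ℝ) * m ^ 3 * c ^ 2 + (339/4 : ℝ) * m ^ 3 * c ^ 3 + (-(31/12) : ℝ) * m ^ 4 + (-(111/16) : ℝ) * m ^ 4 * c + (-(381/16) : ℝ) * m ^ 4 * c ^ 2 + (71/48 : ℝ) * m ^ 5 + (13/8 : ℝ) * m ^ 5 * c + (-(7/24) : ℝ) * m ^ 6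

lemma stmt10_inner (A B a b : ℝ) (m : ℕ) :
    ∑ l ∈ Finset.range m, (1 / 24 : ℝ) *
      ((5 * (a - 3 * (l:ℝ)) ^ 4 + 12 * (a - 3 * (l:ℝ)) ^ 3 * (b + (l:ℝ)) + 6 * (a - 3 * (l:ℝ)) ^ 2 * (b + (l:ℝ)) ^ 2 + 4 * (a - 3 * (l:ℝ)) * (b + (l:ℝ)) ^ 3) * B
        - ((a - 3 * (l:ℝ)) ^ 4 + 4 * (a - 3 * (l:ℝ)) ^ 3 * (b + (l:ℝ)) + 6 * (a - 3 * (l:ℝ)) ^ 2 * (b + (l:ℝ)) ^ 2 + 4 * (a - 3 * (l:ℝ)) * (b + (l:ℝ)) ^ 3) * A)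
      = IBf a b (m:ℝ) * B - IAf a b (m:ℝ) * A := by
  induction m with
  | zero => simp only [Finset.range_zero, Finset.sum_empty, Nat.cast_zero, IBf, IAf]; ring
  | succ m ih =>
    rw [Finset.sum_range_succ, ih]
    simp only [IBf, IAf]
    push_cast
    ring

lemma stmt10_outer (A B c : ℝ) (m : ℕ) :
    ∑ k ∈ Finset.range m,
      (IBf (9 * c - 4 * (k:ℝ)) (k:ℝ) (3 * c - 3 * (k:ℝ) + 1) * B
        - IAf (9 * c - 4 * (k:ℝ)) (k:ℝ) (3 * c - 3 * (k:ℝ) + 1) * A)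
      = PBf c (m:ℝ) * B - PAf c (m:ℝ) * A := by
  induction m with
  | zero => simp only [Finset.range_zero, Finset.sum_empty, Nat.cast_zero, PBf, PAf]; ring
  | succ m ih =>
    rw [Finset.sum_range_succ, ih]
    simp only [IBf, IAf, PBf, PAf]
    push_cast
    ring

lemma stmt10_pow_bigO (j : ℕ) (hj : j ≤ 5) :
    (fun n : ℕ => ((n:ℝ)) ^ j) =O[atTop] (fun n : ℕ => (n:ℝ) ^ 5) := by
  rw [Asymptotics.isBigO_iff]
  refine ⟨1, ?_⟩
  filter_upwards [Filter.eventually_ge_atTop 1] with n hn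
  have h1 : (1:ℝ) ≤ (n:ℝ) := by exact_mod_cast hn
  have h0 : (0:ℝ) ≤ (n:ℝ) := by positivity
  rw [one_mul, Real.norm_eq_abs, Real.norm_eq_abs, abs_of_nonneg (by positivity), abs_of_nonneg (by positivity)]
  exact pow_le_pow_right₀ h1 hj

theorem stmt_10 (A B : ℝ) :
    (fun n : ℕ =>
      (∑ k ∈ Finset.range (n + 1), ∑ l ∈ Finset.range (3 * n - 3 * k + 1),
        let s : ℝ := ((9 * (n : ℤ) - 4 * (k : ℤ) - 3 * (l : ℤ) : ℤ) : ℝ)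
        let t : ℝ := (((k : ℤ) + (l : ℤ) : ℤ) : ℝ)
        (1 / 24 : ℝ) *
          ((5 * s ^ 4 + 12 * s ^ 3 * t + 6 * s ^ 2 * t ^ 2 + 4 * s * t ^ 3) * B
            - (s ^ 4 + 4 * s ^ 3 * t + 6 * s ^ 2 * t ^ 2 + 4 * s * t ^ 3) * A))
        - ((23629 / 60 : ℝ) * B - (1213 / 12 : ℝ) * A) * (n : ℝ) ^ 6)
      =O[atTop] (fun n : ℕ => (n : ℝ) ^ 5) := by
  have key : ∀ n : ℕ,
      ((∑ k ∈ Finset.range (n + 1), ∑ l ∈ Finset.range (3 * n - 3 * k + 1),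
        let s : ℝ := ((9 * (n : ℤ) - 4 * (k : ℤ) - 3 * (l : ℤ) : ℤ) : ℝ)
        let t : ℝ := (((k : ℤ) + (l : ℤ) : ℤ) : ℝ)
        (1 / 24 : ℝ) *
          ((5 * s ^ 4 + 12 * s ^ 3 * t + 6 * s ^ 2 * t ^ 2 + 4 * s * t ^ 3) * B
            - (s ^ 4 + 4 * s ^ 3 * t + 6 * s ^ 2 * t ^ 2 + 4 * s * t ^ 3) * A))
        - ((23629 / 60 : ℝ) * B - (1213 / 12 : ℝ) * A) * (n : ℝ) ^ 6)
      = ((-763/720 : ℝ) * B - (-19/144 : ℝ) * A) * (n:ℝ) ^ 1 + ((19/15 : ℝ) * B - (1/6 : ℝ) * A) * (n:ℝ) ^ 2 + ((10663/72 : ℝ) * B - (1715/72 : ℝ) * A) * (n:ℝ) ^ 3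
        + ((9771/16 : ℝ) * B - (6005/48 : ℝ) * A) * (n:ℝ) ^ 4 + ((12881/15 : ℝ) * B - (608/3 : ℝ) * A) * (n:ℝ) ^ 5 := by
    intro n
    have h1 : (∑ k ∈ Finset.range (n + 1), ∑ l ∈ Finset.range (3 * n - 3 * k + 1),
        let s : ℝ := ((9 * (n : ℤ) - 4 * (k : ℤ) - 3 * (l : ℤ) : ℤ) : ℝ)
        let t : ℝ := (((k : ℤ) + (l : ℤ) : ℤ) : ℝ)
        (1 / 24 : ℝ) *
          ((5 * s ^ 4 + 12 * s ^ 3 * t + 6 * s ^ 2 * t ^ 2 + 4 * s * t ^ 3) * B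
            - (s ^ 4 + 4 * s ^ 3 * t + 6 * s ^ 2 * t ^ 2 + 4 * s * t ^ 3) * A))
        = ∑ k ∈ Finset.range (n + 1),
          (IBf (9 * (n:ℝ) - 4 * (k:ℝ)) (k:ℝ) (3 * (n:ℝ) - 3 * (k:ℝ) + 1) * B
            - IAf (9 * (n:ℝ) - 4 * (k:ℝ)) (k:ℝ) (3 * (n:ℝ) - 3 * (k:ℝ) + 1) * A) := by
      refine Finset.sum_congr rfl fun k hk => ?_
      have hk' : k ≤ n := Nat.lt_succ_iff.mp (Finset.mem_range.mp hk)
      have h3 : 3 * k ≤ 3 * n := by omega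
      have hm : ((3 * n - 3 * k + 1 : ℕ) : ℝ) = 3 * (n:ℝ) - 3 * (k:ℝ) + 1 := by
        rw [Nat.cast_add, Nat.cast_sub h3]
        push_cast
        ring
      rw [← hm, ← stmt10_inner A B (9 * (n:ℝ) - 4 * (k:ℝ)) (k:ℝ) (3 * n - 3 * k + 1)]
      refine Finset.sum_congr rfl fun l hl => ?_
      push_cast
      ring
    rw [h1, stmt10_outer A B (n:ℝ) (n + 1)]
    simp only [PBf, PAf]
    push_cast
    ring
  rw [funext key]
  have h5 : (fun n : ℕ => (n:ℝ) ^ 5) =O[atTop] (fun n : ℕ => (n:ℝ) ^ 5) := isBigO_refl _ _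
  exact (((((stmt10_pow_bigO 1 (by norm_num)).const_mul_left ((-763/720 : ℝ) * B - (-19/144 : ℝ) * A)).add
    ((stmt10_pow_bigO 2 (by norm_num)).const_mul_left ((19/15 : ℝ) * B - (1/6 : ℝ) * A))).add
    ((stmt10_pow_bigO 3 (by norm_num)).const_mul_left ((10663/72 : ℝ) * B - (1715/72 : ℝ) * A))).add
    ((stmt10_pow_bigO 4 (by norm_num)).const_mul_left ((9771/16 : ℝ) * B - (6005/48 : ℝ) * A))).add
    ((stmt10_pow_bigO 5 (by norm_num)).const_mul_left ((12881/15 : ℝ) * B - (608/3 : ℝ) * A))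
end

section
/- For all real numbers A and B, the function n ↦ Σ_{k=0}^{n} Σ_{l=0}^{3n−3k} (1/24)·[ (5s⁴ + 12s³t + 6s²t² + 4st³)·B − (s⁴ + 4s³t + 6s²t² + 4st³)·A ] − ((1/6)·A − (61/30)·B)·n⁶ is O(n⁵) as n → ∞, where s = 3n−4k−3l and t = k+l (computed in the integers and cast to the reals). -/
open Finset Filter Asymptotics

private lemma sum_poly5 (c0 c1 c2 c3 c4 c5 : ℝ) (M : ℕ) :
    ∑ l ∈ Finset.range (M + 1),
      (c0 + c1 * (l : ℝ) + c2 * (l : ℝ) ^ 2 + c3 * (l : ℝ) ^ 3 + c4 * (l : ℝ) ^ 4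
        + c5 * (l : ℝ) ^ 5)
    = c0 * ((M : ℝ) + 1) + c1 * ((M : ℝ) * ((M : ℝ) + 1) / 2)
      + c2 * ((M : ℝ) * ((M : ℝ) + 1) * (2 * (M : ℝ) + 1) / 6)
      + c3 * ((M : ℝ) ^ 2 * ((M : ℝ) + 1) ^ 2 / 4)
      + c4 * ((M : ℝ) * ((M : ℝ) + 1) * (2 * (M : ℝ) + 1) * (3 * (M : ℝ) ^ 2 + 3 * (M : ℝ) - 1) / 30)
      + c5 * ((M : ℝ) ^ 2 * ((M : ℝ) + 1) ^ 2 * (2 * (M : ℝ) ^ 2 + 2 * (M : ℝ) - 1) / 12) := by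
  induction M with
  | zero => norm_num
  | succ m ih =>
    rw [Finset.sum_range_succ, ih]
    push_cast
    ring

private lemma innerSumEval11 (A B : ℝ) (n k : ℕ) (hk : k ≤ n) :
    (∑ l ∈ Finset.range (3 * n - 3 * k + 1),
        let s : ℝ := ((3 * (n : ℤ) - 4 * (k : ℤ) - 3 * (l : ℤ) : ℤ) : ℝ)
        let t : ℝ := (((k : ℤ) + (l : ℤ) : ℤ) : ℝ)
        (1 / 24 : ℝ) *
          ((5 * s ^ 4 + 12 * s ^ 3 * t + 6 * s ^ 2 * t ^ 2 + 4 * s * t ^ 3) * B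
            - (s ^ 4 + 4 * s ^ 3 * t + 6 * s ^ 2 * t ^ 2 + 4 * s * t ^ 3) * A))
    = ((-1/16 : ℝ) * (k : ℝ) + (11/8 : ℝ) * (k : ℝ) ^ 3 + (-145/48 : ℝ) * (k : ℝ) ^ 4 + (7/4 : ℝ) * (k : ℝ) ^ 5 + (1/16 : ℝ) * (n : ℝ) + (-4 : ℝ) * (n : ℝ) * (k : ℝ) ^ 2 + (23/2 : ℝ) * (n : ℝ) * (k : ℝ) ^ 3 + (-65/8 : ℝ) * (n : ℝ) * (k : ℝ) ^ 4 + (15/4 : ℝ) * (n : ℝ) ^ 2 * (k : ℝ) + (-63/4 : ℝ) * (n : ℝ) ^ 2 * (k : ℝ) ^ 2 + (57/4 : ℝ) * (n : ℝ) ^ 2 * (k : ℝ) ^ 3 + (-9/8 : ℝ) * (n : ℝ) ^ 3 + (9 : ℝ) * (n : ℝ) ^ 3 * (k : ℝ) + (-45/4 : ℝ) * (n : ℝ) ^ 3 * (k : ℝ) ^ 2 + (-27/16 : ℝ) * (n : ℝ) ^ 4 + (27/8 : ℝ) * (n : ℝ) ^ 4 * (k : ℝ)) * A + ((41/80 : ℝ)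 * (k : ℝ) + (-89/8 : ℝ) * (k : ℝ) ^ 3 + (1157/48 : ℝ) * (k : ℝ) ^ 4 + (-137/10 : ℝ) * (k : ℝ) ^ 5 + (-41/80 : ℝ) * (n : ℝ) + (127/4 : ℝ) * (n : ℝ) * (k : ℝ) ^ 2 + (-89 : ℝ) * (n : ℝ) * (k : ℝ) ^ 3 + (487/8 : ℝ) * (n : ℝ) * (k : ℝ) ^ 4 + (-57/2 : ℝ) * (n : ℝ) ^ 2 * (k : ℝ) + (459/4 : ℝ) * (n : ℝ) ^ 2 * (k : ℝ) ^ 2 + (-393/4 : ℝ) * (n : ℝ) ^ 2 * (k : ℝ) ^ 3 + (63/8 : ℝ) * (n : ℝ) ^ 3 + (-117/2 : ℝ) * (n : ℝ) ^ 3 * (k : ℝ) + (261/4 : ℝ) * (n : ℝ) ^ 3 * (k : ℝ) ^ 2 + (135/16 : ℝ) * (n : ℝ) ^ 4 + (-81/8 : ℝ) * (n : ℝ) ^ 4 * (k : ℝ) + (-81/20 : ℝ) * (n : ℝ) ^ 5) * B := by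
  have h3 : 3 * k ≤ 3 * n := by omega
  have hM : ((3 * n - 3 * k : ℕ) : ℝ) = 3 * (n : ℝ) - 3 * (k : ℝ) := by
    rw [Nat.cast_sub h3]; push_cast; ring
  rw [show (∑ l ∈ Finset.range (3 * n - 3 * k + 1),
        let s : ℝ := ((3 * (n : ℤ) - 4 * (k : ℤ) - 3 * (l : ℤ) : ℤ) : ℝ)
        let t : ℝ := (((k : ℤ) + (l : ℤ) : ℤ) : ℝ)
        (1 / 24 : ℝ) *
          ((5 * s ^ 4 + 12 * s ^ 3 * t + 6 * s ^ 2 * t ^ 2 + 4 * s * t ^ 3) * B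
            - (s ^ 4 + 4 * s ^ 3 * t + 6 * s ^ 2 * t ^ 2 + 4 * s * t ^ 3) * A))
      = ∑ l ∈ Finset.range (3 * n - 3 * k + 1),
        ((((-10/3 : ℝ) * (k : ℝ) ^ 4 + (27/2 : ℝ) * (n : ℝ) * (k : ℝ) ^ 3 + (-81/4 : ℝ) * (n : ℝ) ^ 2 * (k : ℝ) ^ 2 + (27/2 : ℝ) * (n : ℝ) ^ 3 * (k : ℝ) + (-27/8 : ℝ) * (n : ℝ) ^ 4) * A + ((74/3 : ℝ) * (k : ℝ) ^ 4 + (-187/2 : ℝ) * (n : ℝ) * (k : ℝ) ^ 3 + (513/4 : ℝ) * (n : ℝ) ^ 2 * (k : ℝ) ^ 2 + (-153/2 : ℝ) * (n : ℝ) ^ 3 * (k : ℝ) + (135/8 : ℝ) * (n : ℝ) ^ 4) * B) + (((-53/6 : ℝ) * (k : ℝ) ^ 3 + (27 : ℝ) * (n : ℝ) * (k : ℝ) ^ 2 + (-27 : ℝ) * (n : ℝ) ^ 2 * (k : ℝ) + (9 : ℝ) * (n : ℝ) ^ 3) * A + ((135/2 : ℝ) * (k : ℝ) ^ 3 + (-195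 : ℝ) * (n : ℝ) * (k : ℝ) ^ 2 + (180 : ℝ) * (n : ℝ) ^ 2 * (k : ℝ) + (-54 : ℝ) * (n : ℝ) ^ 3) * B) * (l : ℝ) + (((-35/4 : ℝ) * (k : ℝ) ^ 2 + (18 : ℝ) * (n : ℝ) * (k : ℝ) + (-9 : ℝ) * (n : ℝ) ^ 2) * A + ((275/4 : ℝ) * (k : ℝ) ^ 2 + (-135 : ℝ) * (n : ℝ) * (k : ℝ) + (63 : ℝ) * (n : ℝ) ^ 2) * B) * (l : ℝ) ^ 2 + (((-23/6 : ℝ) * (k : ℝ) + (4 : ℝ) * (n : ℝ)) * A + ((185/6 : ℝ) * (k : ℝ) + (-31 : ℝ) * (n : ℝ)) * B) * (l : ℝ) ^ 3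
          + (((-5/8 : ℝ)) * A + ((41/8 : ℝ)) * B) * (l : ℝ) ^ 4 + (0 : ℝ) * (l : ℝ) ^ 5) from
    Finset.sum_congr rfl fun l _ => by push_cast; ring]
  rw [sum_poly5, hM]
  ring

private lemma pow_bigO (j : ℕ) (hj : j ≤ 5) :
    (fun n : ℕ => (n : ℝ) ^ j) =O[atTop] (fun n : ℕ => (n : ℝ) ^ 5) := by
  rw [Asymptotics.isBigO_iff]
  refine ⟨1, ?_⟩
  filter_upwards [Filter.eventually_ge_atTop 1] with n hn
  have h1 : (1 : ℝ) ≤ (n : ℝ) := by exact_mod_cast hn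
  rw [one_mul, Real.norm_eq_abs, Real.norm_eq_abs,
    abs_of_nonneg (by positivity), abs_of_nonneg (by positivity)]
  exact pow_le_pow_right₀ h1 hj

theorem stmt_11 (A B : ℝ) :
    (fun n : ℕ =>
      (∑ k ∈ Finset.range (n + 1), ∑ l ∈ Finset.range (3 * n - 3 * k + 1),
        let s : ℝ := ((3 * (n : ℤ) - 4 * (k : ℤ) - 3 * (l : ℤ) : ℤ) : ℝ)
        let t : ℝ := (((k : ℤ) + (l : ℤ) : ℤ) : ℝ)
        (1 / 24 : ℝ) *
          ((5 * s ^ 4 + 12 * s ^ 3 * t + 6 * s ^ 2 * t ^ 2 + 4 * s * t ^ 3) * B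
            - (s ^ 4 + 4 * s ^ 3 * t + 6 * s ^ 2 * t ^ 2 + 4 * s * t ^ 3) * A))
        - ((1 / 6 : ℝ) * A - (61 / 30 : ℝ) * B) * (n : ℝ) ^ 6)
      =O[atTop] (fun n : ℕ => (n : ℝ) ^ 5) := by
  have key : ∀ n : ℕ,
      ((∑ k ∈ Finset.range (n + 1), ∑ l ∈ Finset.range (3 * n - 3 * k + 1),
        let s : ℝ := ((3 * (n : ℤ) - 4 * (k : ℤ) - 3 * (l : ℤ) : ℤ) : ℝ)
        let t : ℝ := (((k : ℤ) + (l : ℤ) : ℤ) : ℝ)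
        (1 / 24 : ℝ) *
          ((5 * s ^ 4 + 12 * s ^ 3 * t + 6 * s ^ 2 * t ^ 2 + 4 * s * t ^ 3) * B
            - (s ^ 4 + 4 * s ^ 3 * t + 6 * s ^ 2 * t ^ 2 + 4 * s * t ^ 3) * A))
        - ((1 / 6 : ℝ) * A - (61 / 30 : ℝ) * B) * (n : ℝ) ^ 6)
      = (((19/144 : ℝ)) * A + ((-763/720 : ℝ)) * B) * (n : ℝ) + (((-1/6 : ℝ)) * A + ((41/30 : ℝ)) * B) * (n : ℝ) ^ 2 + (((-95/72 : ℝ)) * A + ((637/72 : ℝ)) * B) * (n : ℝ) ^ 3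
        + (((-65/48 : ℝ)) * A + ((103/16 : ℝ)) * B) * (n : ℝ) ^ 4 + (((-1/6 : ℝ)) * A + ((-121/60 : ℝ)) * B) * (n : ℝ) ^ 5 := by
    intro n
    rw [show (∑ k ∈ Finset.range (n + 1), ∑ l ∈ Finset.range (3 * n - 3 * k + 1),
        let s : ℝ := ((3 * (n : ℤ) - 4 * (k : ℤ) - 3 * (l : ℤ) : ℤ) : ℝ)
        let t : ℝ := (((k : ℤ) + (l : ℤ) : ℤ) : ℝ)
        (1 / 24 : ℝ) *
          ((5 * s ^ 4 + 12 * s ^ 3 * t + 6 * s ^ 2 * t ^ 2 + 4 * s * t ^ 3) * B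
            - (s ^ 4 + 4 * s ^ 3 * t + 6 * s ^ 2 * t ^ 2 + 4 * s * t ^ 3) * A))
      = ∑ k ∈ Finset.range (n + 1),
          ((((1/16 : ℝ) * (n : ℝ) + (-9/8 : ℝ) * (n : ℝ) ^ 3 + (-27/16 : ℝ) * (n : ℝ) ^ 4) * A + ((-41/80 : ℝ) * (n : ℝ) + (63/8 : ℝ) * (n : ℝ) ^ 3 + (135/16 : ℝ) * (n : ℝ) ^ 4 + (-81/20 : ℝ) * (n : ℝ) ^ 5) * B) + (((-1/16 : ℝ) + (15/4 : ℝ) * (n : ℝ) ^ 2 + (9 : ℝ) * (n : ℝ) ^ 3 + (27/8 : ℝ) * (n : ℝ) ^ 4) * A + ((41/80 : ℝ) + (-57/2 : ℝ) * (n : ℝ) ^ 2 + (-117/2 : ℝ) * (n : ℝ) ^ 3 + (-81/8 : ℝ) * (n : ℝ) ^ 4) * B) * (k : ℝ) + (((-4 : ℝ) * (n : ℝ) + (-63/4 : ℝ) * (n : ℝ) ^ 2 + (-45/4 : ℝ) * (n : ℝ) ^ 3) * A + ((127/4 : ℝ) * (n : ℝ) + (459/4 : ℝ) * (n : ℝ)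 ^ 2 + (261/4 : ℝ) * (n : ℝ) ^ 3) * B) * (k : ℝ) ^ 2 + (((11/8 : ℝ) + (23/2 : ℝ) * (n : ℝ) + (57/4 : ℝ) * (n : ℝ) ^ 2) * A + ((-89/8 : ℝ) + (-89 : ℝ) * (n : ℝ) + (-393/4 : ℝ) * (n : ℝ) ^ 2) * B) * (k : ℝ) ^ 3
            + (((-145/48 : ℝ) + (-65/8 : ℝ) * (n : ℝ)) * A + ((1157/48 : ℝ) + (487/8 : ℝ) * (n : ℝ)) * B) * (k : ℝ) ^ 4 + (((7/4 : ℝ)) * A + ((-137/10 : ℝ)) * B) * (k : ℝ) ^ 5) from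
      Finset.sum_congr rfl fun k hk => by
        rw [innerSumEval11 A B n k (Nat.lt_succ_iff.mp (Finset.mem_range.mp hk))]; ring]
    rw [sum_poly5]
    ring
  have main : (fun n : ℕ =>
      (((19/144 : ℝ)) * A + ((-763/720 : ℝ)) * B) * (n : ℝ) + (((-1/6 : ℝ)) * A + ((41/30 : ℝ)) * B) * (n : ℝ) ^ 2 + (((-95/72 : ℝ)) * A + ((637/72 : ℝ)) * B) * (n : ℝ) ^ 3
        + (((-65/48 : ℝ)) * A + ((103/16 : ℝ)) * B) * (n : ℝ) ^ 4 + (((-1/6 : ℝ)) * A + ((-121/60 : ℝ)) * B) * (n : ℝ) ^ 5)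
      =O[atTop] (fun n : ℕ => (n : ℝ) ^ 5) := by
    have h1 := (pow_bigO 1 (by norm_num)).const_mul_left ((((19/144 : ℝ)) * A + ((-763/720 : ℝ)) * B))
    have h2 := (pow_bigO 2 (by norm_num)).const_mul_left ((((-1/6 : ℝ)) * A + ((41/30 : ℝ)) * B))
    have h3 := (pow_bigO 3 (by norm_num)).const_mul_left ((((-95/72 : ℝ)) * A + ((637/72 : ℝ)) * B))
    have h4 := (pow_bigO 4 (by norm_num)).const_mul_left ((((-65/48 : ℝ)) * A + ((103/16 : ℝ)) * B))
    have h5 := (pow_bigO 5 (by norm_num)).const_mul_left ((((-1/6 : ℝ)) * A + ((-121/60 : ℝ)) * B))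
    simpa [pow_one] using ((((h1.add h2).add h3).add h4).add h5)
  exact main.congr' (Filter.Eventually.of_forall fun n => (key n).symm)
    (Filter.Eventually.of_forall fun n => rfl)
end
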